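/- arXiv:2506.15630 — 6 statements merged into one kernel-verified Lean document; each statement's English description precedes it below -/
import Mathlib

section
/- For every integer p ≥ 1 and every c₀ > 0 there exists C > 0 such that the following holds: for all real numbers k ≥ 1, ρ ≥ k and h_K, h_V, h_I, h_P > 0 satisfying (h_K k)^{2p}ρ + (h_V k)^{2p}k + (h_I k)^{2p}k + (h_P k)^{2p} ≤ c₀, one has, componentwise, ℳ ≤ C·[the 4×4 matrix with rows (√ρ, √ρ, √ρ, 0), (√k, √k, √k, 0), (√k, √k, √k, 0), (0, 0, 0, 1)] and ℳ_Ω ≤ C·(√ρ, √k, √k, 1)ᵀ. (Paper's Corollary on the quasi-optimality constant for the coarsest meshes, Corollary 1.3.) -/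
/-- The matrix `𝒞` of norms of the localised data-to-solution map. -/
noncomputable def calC (k ρ : ℝ) : Matrix (Fin 4) (Fin 4) ℝ :=
  !![ρ, Real.sqrt (k * ρ), 0, 0;
     Real.sqrt (k * ρ), k, k, 0;
     0, k, k, 0;
     0, 0, 0, 1]

/-- The diagonal matrix `(ℋk)^p = diag((h_K k)^p, (h_V k)^p, (h_I k)^p, (h_P k)^p)`. -/
noncomputable def calHk (p : ℕ) (k hK hV hI hP : ℝ) : Matrix (Fin 4) (Fin 4) ℝ :=
  Matrix.diagonal ![(hK * k) ^ p, (hV * k) ^ p, (hI * k) ^ p, (hP * k) ^ p]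

/-- The matrix `𝒯` capturing propagation of Galerkin errors between subdomains. -/
noncomputable def calT (p : ℕ) (k ρ hK hV hI hP : ℝ) : Matrix (Fin 4) (Fin 4) ℝ :=
  !![1, (hV * k) ^ (2 * p) * Real.sqrt (k * ρ),
       (hV * k) ^ (2 * p) * Real.sqrt (k * ρ) * (hI * k) ^ (2 * p) * k, 0;
     (hK * k) ^ (2 * p) * Real.sqrt (k * ρ), 1, (hI * k) ^ (2 * p) * k, 0;
     (hK * k) ^ (2 * p) * Real.sqrt (k * ρ) * (hV * k) ^ (2 * p) * k,
       (hV * k) ^ (2 * p) * k, 1, 0;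
     0, 0, 0, 1]

/-- `ℳ := Id + 𝒯 𝒞 (ℋk)^p`. -/
noncomputable def calM (p : ℕ) (k ρ hK hV hI hP : ℝ) : Matrix (Fin 4) (Fin 4) ℝ :=
  1 + calT p k ρ hK hV hI hP * calC k ρ * calHk p k hK hV hI hP

/-- `ℳ_Ω := ℳ · (1,1,1,1)ᵀ`. -/
noncomputable def calMOmega (p : ℕ) (k ρ hK hV hI hP : ℝ) : Fin 4 → ℝ :=
  (calM p k ρ hK hV hI hP).mulVec fun _ => 1

private lemma aux5 {t : ℝ} (ht : 1 ≤ t) {x y : ℝ} (hx0 : 0 ≤ x) (hy0 : 0 ≤ y)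
    (hx : x ≤ t) (hy : y ≤ t) {m n : ℕ} (h : m + n ≤ 5) : x ^ m * y ^ n ≤ t ^ 5 := by
  have ht0 : (0:ℝ) ≤ t := le_trans zero_le_one ht
  calc x ^ m * y ^ n ≤ t ^ m * t ^ n :=
        mul_le_mul (pow_le_pow_left₀ hx0 hx m) (pow_le_pow_left₀ hy0 hy n)
          (pow_nonneg hy0 n) (pow_nonneg ht0 m)
    _ = t ^ (m + n) := (pow_add t m n).symm
    _ ≤ t ^ 5 := pow_le_pow_right₀ ht h

set_option maxHeartbeats 4000000 in
/-- Corollary 1.3 (bound on the quasi-optimality constant for the coarsest meshes). -/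
theorem coarsest_mesh_quasioptimality_bound (p : ℕ) (hp : 1 ≤ p) (c₀ : ℝ) (hc₀ : 0 < c₀) :
    ∃ C : ℝ, 0 < C ∧
      ∀ k ρ hK hV hI hP : ℝ, 1 ≤ k → k ≤ ρ →
        0 < hK → 0 < hV → 0 < hI → 0 < hP →
        (hK * k) ^ (2 * p) * ρ + (hV * k) ^ (2 * p) * k + (hI * k) ^ (2 * p) * k
            + (hP * k) ^ (2 * p) ≤ c₀ →
        (∀ i j : Fin 4, calM p k ρ hK hV hI hP i j ≤
            C * !![Real.sqrt ρ, Real.sqrt ρ, Real.sqrt ρ, 0;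
                   Real.sqrt k, Real.sqrt k, Real.sqrt k, 0;
                   Real.sqrt k, Real.sqrt k, Real.sqrt k, 0;
                   0, 0, 0, 1] i j) ∧
        (∀ i : Fin 4, calMOmega p k ρ hK hV hI hP i ≤
            C * ![Real.sqrt ρ, Real.sqrt k, Real.sqrt k, 1] i) := by
  refine ⟨12 * (1 + Real.sqrt c₀) ^ 5, by positivity, ?_⟩
  intro k ρ hK hV hI hP hk1 hkρ hhK hhV hhI hhP hsum
  have hk0 : (0:ℝ) ≤ k := by linarith
  have hρ0 : (0:ℝ) ≤ ρ := by linarith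
  obtain ⟨sk, hsk0, rfl⟩ : ∃ x : ℝ, 0 ≤ x ∧ k = x ^ 2 :=
    ⟨Real.sqrt k, Real.sqrt_nonneg _, (Real.sq_sqrt hk0).symm⟩
  obtain ⟨sρ, hsρ0, rfl⟩ : ∃ x : ℝ, 0 ≤ x ∧ ρ = x ^ 2 :=
    ⟨Real.sqrt ρ, Real.sqrt_nonneg _, (Real.sq_sqrt hρ0).symm⟩
  have hsk1 : 1 ≤ sk := by nlinarith
  have hsρk : sk ≤ sρ := by nlinarith
  have hsρ1 : 1 ≤ sρ := hsk1.trans hsρk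
  have hskpos : 0 < sk := lt_of_lt_of_le one_pos hsk1
  have hsρpos : 0 < sρ := lt_of_lt_of_le one_pos hsρ1
  have hsqkρ : Real.sqrt (sk ^ 2 * sρ ^ 2) = sk * sρ := by
    rw [← mul_pow, Real.sqrt_sq (mul_nonneg hsk0 hsρ0)]
  have hsqk : Real.sqrt (sk ^ 2) = sk := Real.sqrt_sq hsk0
  have hsqρ : Real.sqrt (sρ ^ 2) = sρ := Real.sqrt_sq hsρ0
  set t := 1 + Real.sqrt c₀ with ht
  have hs0 : 0 ≤ Real.sqrt c₀ := Real.sqrt_nonneg _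
  have ht1 : (1:ℝ) ≤ t := by rw [ht]; linarith
  simp only [pow_mul'] at hsum
  have ha0 : (0:ℝ) < (hK * sk ^ 2) ^ p := by positivity
  have hb0 : (0:ℝ) < (hV * sk ^ 2) ^ p := by positivity
  have hc0 : (0:ℝ) < (hI * sk ^ 2) ^ p := by positivity
  have hd0 : (0:ℝ) < (hP * sk ^ 2) ^ p := by positivity
  have hA : (hK * sk ^ 2) ^ p * sρ ≤ t := by
    have h1 : ((hK * sk ^ 2) ^ p * sρ) ^ 2 ≤ c₀ := by
      nlinarith [sq_nonneg ((hV * sk ^ 2) ^ p * sk), sq_nonneg ((hI * sk ^ 2) ^ p * sk),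
        sq_nonneg ((hP * sk ^ 2) ^ p)]
    have h2 := Real.sqrt_le_sqrt h1
    rw [Real.sqrt_sq (by positivity)] at h2
    linarith
  have hB : (hV * sk ^ 2) ^ p * sk ≤ t := by
    have h1 : ((hV * sk ^ 2) ^ p * sk) ^ 2 ≤ c₀ := by
      nlinarith [sq_nonneg ((hK * sk ^ 2) ^ p * sρ), sq_nonneg ((hI * sk ^ 2) ^ p * sk),
        sq_nonneg ((hP * sk ^ 2) ^ p)]
    have h2 := Real.sqrt_le_sqrt h1
    rw [Real.sqrt_sq (by positivity)] at h2
    linarith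
  have hC : (hI * sk ^ 2) ^ p * sk ≤ t := by
    have h1 : ((hI * sk ^ 2) ^ p * sk) ^ 2 ≤ c₀ := by
      nlinarith [sq_nonneg ((hK * sk ^ 2) ^ p * sρ), sq_nonneg ((hV * sk ^ 2) ^ p * sk),
        sq_nonneg ((hP * sk ^ 2) ^ p)]
    have h2 := Real.sqrt_le_sqrt h1
    rw [Real.sqrt_sq (by positivity)] at h2
    linarith
  have hD : (hP * sk ^ 2) ^ p ≤ t := by
    have h1 : ((hP * sk ^ 2) ^ p) ^ 2 ≤ c₀ := by
      nlinarith [sq_nonneg ((hK * sk ^ 2) ^ p * sρ), sq_nonneg ((hV * sk ^ 2) ^ p * sk),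
        sq_nonneg ((hI * sk ^ 2) ^ p * sk)]
    have h2 := Real.sqrt_le_sqrt h1
    rw [Real.sqrt_sq (by positivity)] at h2
    linarith
  have hA0 : (0:ℝ) ≤ (hK * sk ^ 2) ^ p * sρ := by positivity
  have hB0 : (0:ℝ) ≤ (hV * sk ^ 2) ^ p * sk := by positivity
  have hC0 : (0:ℝ) ≤ (hI * sk ^ 2) ^ p * sk := by positivity
  have hD0 : (0:ℝ) ≤ (hP * sk ^ 2) ^ p := le_of_lt hd0
  have hQ1 : (1:ℝ) ≤ t ^ 5 := by
    calc (1:ℝ) = 1 ^ 5 := (one_pow 5).symm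
    _ ≤ t ^ 5 := pow_le_pow_left₀ zero_le_one ht1 5
  have hQρ : (1:ℝ) ≤ t ^ 5 * sρ := by nlinarith
  have hQk : (1:ℝ) ≤ t ^ 5 * sk := by nlinarith
  have m1 : ((hK * sk ^ 2) ^ p * sρ) ^ 1 * ((hV * sk ^ 2) ^ p * sk) ^ 2 ≤ t ^ 5 :=
    aux5 ht1 hA0 hB0 hA hB (by norm_num)
  have m2 : ((hV * sk ^ 2) ^ p * sk) ^ 3 * ((hI * sk ^ 2) ^ p * sk) ^ 0 ≤ t ^ 5 :=
    aux5 ht1 hB0 hC0 hB hC (by norm_num)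
  have m3 : ((hV * sk ^ 2) ^ p * sk) ^ 3 * ((hI * sk ^ 2) ^ p * sk) ^ 2 ≤ t ^ 5 :=
    aux5 ht1 hB0 hC0 hB hC (by norm_num)
  have m4 : ((hV * sk ^ 2) ^ p * sk) ^ 2 * ((hI * sk ^ 2) ^ p * sk) ^ 1 ≤ t ^ 5 :=
    aux5 ht1 hB0 hC0 hB hC (by norm_num)
  have m5 : ((hV * sk ^ 2) ^ p * sk) ^ 2 * ((hI * sk ^ 2) ^ p * sk) ^ 3 ≤ t ^ 5 :=
    aux5 ht1 hB0 hC0 hB hC (by norm_num)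
  have m6 : ((hK * sk ^ 2) ^ p * sρ) ^ 3 * ((hV * sk ^ 2) ^ p * sk) ^ 0 ≤ t ^ 5 :=
    aux5 ht1 hA0 hB0 hA hB (by norm_num)
  have m7 : ((hK * sk ^ 2) ^ p * sρ) ^ 2 * ((hV * sk ^ 2) ^ p * sk) ^ 1 ≤ t ^ 5 :=
    aux5 ht1 hA0 hB0 hA hB (by norm_num)
  have m8 : ((hV * sk ^ 2) ^ p * sk) ^ 1 * ((hI * sk ^ 2) ^ p * sk) ^ 2 ≤ t ^ 5 :=
    aux5 ht1 hB0 hC0 hB hC (by norm_num)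
  have m9 : ((hI * sk ^ 2) ^ p * sk) ^ 3 * ((hP * sk ^ 2) ^ p) ^ 0 ≤ t ^ 5 :=
    aux5 ht1 hC0 hD0 hC hD (by norm_num)
  have m10 : ((hK * sk ^ 2) ^ p * sρ) ^ 3 * ((hV * sk ^ 2) ^ p * sk) ^ 2 ≤ t ^ 5 :=
    aux5 ht1 hA0 hB0 hA hB (by norm_num)
  have m11 : ((hK * sk ^ 2) ^ p * sρ) ^ 2 * ((hV * sk ^ 2) ^ p * sk) ^ 3 ≤ t ^ 5 :=
    aux5 ht1 hA0 hB0 hA hB (by norm_num)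
  have m12 : (hK * sk ^ 2) ^ p * sρ ≤ t ^ 5 := hA.trans (le_self_pow₀ ht1 (by norm_num))
  have m13 : (hV * sk ^ 2) ^ p * sk ≤ t ^ 5 := hB.trans (le_self_pow₀ ht1 (by norm_num))
  have m14 : (hI * sk ^ 2) ^ p * sk ≤ t ^ 5 := hC.trans (le_self_pow₀ ht1 (by norm_num))
  have m15 : (hP * sk ^ 2) ^ p ≤ t ^ 5 := hD.trans (le_self_pow₀ ht1 (by norm_num))
  constructor
  · intro i j
    fin_cases i <;> fin_cases j <;>
      simp [calM, calT, calC, calHk, Matrix.mul_apply, Fin.sum_univ_four,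
        Matrix.one_apply, Matrix.vecMul_diagonal, hsqkρ, hsqk, hsqρ, pow_mul'] <;>
      linarith [mul_le_mul_of_nonneg_right m1 hsρ0, mul_le_mul_of_nonneg_right m1 hsk0,
        mul_le_mul_of_nonneg_right m2 hsρ0, mul_le_mul_of_nonneg_right m2 hsk0,
        mul_le_mul_of_nonneg_right m3 hsρ0, mul_le_mul_of_nonneg_right m3 hsk0,
        mul_le_mul_of_nonneg_right m4 hsρ0, mul_le_mul_of_nonneg_right m4 hsk0,
        mul_le_mul_of_nonneg_right m5 hsρ0, mul_le_mul_of_nonneg_right m5 hsk0,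
        mul_le_mul_of_nonneg_right m6 hsρ0, mul_le_mul_of_nonneg_right m6 hsk0,
        mul_le_mul_of_nonneg_right m7 hsρ0, mul_le_mul_of_nonneg_right m7 hsk0,
        mul_le_mul_of_nonneg_right m8 hsρ0, mul_le_mul_of_nonneg_right m8 hsk0,
        mul_le_mul_of_nonneg_right m9 hsρ0, mul_le_mul_of_nonneg_right m9 hsk0,
        mul_le_mul_of_nonneg_right m10 hsρ0, mul_le_mul_of_nonneg_right m10 hsk0,
        mul_le_mul_of_nonneg_right m11 hsρ0, mul_le_mul_of_nonneg_right m11 hsk0,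
        mul_le_mul_of_nonneg_right m12 hsρ0, mul_le_mul_of_nonneg_right m12 hsk0,
        mul_le_mul_of_nonneg_right m13 hsρ0, mul_le_mul_of_nonneg_right m13 hsk0,
        mul_le_mul_of_nonneg_right m14 hsρ0, mul_le_mul_of_nonneg_right m14 hsk0,
        m15, hQ1, hQρ, hQk]
  · intro i
    fin_cases i <;>
      simp [calMOmega, Matrix.mulVec, dotProduct, Fin.sum_univ_four,
        calM, calT, calC, calHk, Matrix.mul_apply,
        Matrix.one_apply, Matrix.vecMul_diagonal, hsqkρ, hsqk, hsqρ, pow_mul'] <;>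
      linarith [mul_le_mul_of_nonneg_right m1 hsρ0, mul_le_mul_of_nonneg_right m1 hsk0,
        mul_le_mul_of_nonneg_right m2 hsρ0, mul_le_mul_of_nonneg_right m2 hsk0,
        mul_le_mul_of_nonneg_right m3 hsρ0, mul_le_mul_of_nonneg_right m3 hsk0,
        mul_le_mul_of_nonneg_right m4 hsρ0, mul_le_mul_of_nonneg_right m4 hsk0,
        mul_le_mul_of_nonneg_right m5 hsρ0, mul_le_mul_of_nonneg_right m5 hsk0,
        mul_le_mul_of_nonneg_right m6 hsρ0, mul_le_mul_of_nonneg_right m6 hsk0,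
        mul_le_mul_of_nonneg_right m7 hsρ0, mul_le_mul_of_nonneg_right m7 hsk0,
        mul_le_mul_of_nonneg_right m8 hsρ0, mul_le_mul_of_nonneg_right m8 hsk0,
        mul_le_mul_of_nonneg_right m9 hsρ0, mul_le_mul_of_nonneg_right m9 hsk0,
        mul_le_mul_of_nonneg_right m10 hsρ0, mul_le_mul_of_nonneg_right m10 hsk0,
        mul_le_mul_of_nonneg_right m11 hsρ0, mul_le_mul_of_nonneg_right m11 hsk0,
        mul_le_mul_of_nonneg_right m12 hsρ0, mul_le_mul_of_nonneg_right m12 hsk0,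
        mul_le_mul_of_nonneg_right m13 hsρ0, mul_le_mul_of_nonneg_right m13 hsk0,
        mul_le_mul_of_nonneg_right m14 hsρ0, mul_le_mul_of_nonneg_right m14 hsk0,
        m15, hQ1, hQρ, hQk]
end

section
/- For every integer p ≥ 1 and every c₀ > 0 there exists C > 0 such that the following holds: for all 0 < ε ≤ c₀ and all real numbers k ≥ 1, ρ ≥ k and h_K, h_V, h_I, h_P > 0 satisfying (h_K k)^{2p}ρ + (h_V k)^{2p}k + (h_I k)^{2p}k + (h_P k)^{2p} ≤ ε, one has, componentwise, ℳ_RE ≤ C√ε·[the 4×4 matrix with rows (1, √(ρ/k), √(ρ/k), 0), (√(k/ρ), 1, 1, 0), (√(k/ρ), 1, 1, 0), (0, 0, 0, 1)] and ℳ_{RE,Ω} ≤ C√ε·(√(ρ/k), 1, 1, 1)ᵀ. (Paper's Corollary on the relative error for the coarsest meshes, Corollary 1.4.) -/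
/-- `ℳ_RE := ℳ (ℋk)^p`. -/
noncomputable def calMRE (p : ℕ) (k ρ hK hV hI hP : ℝ) : Matrix (Fin 4) (Fin 4) ℝ :=
  calM p k ρ hK hV hI hP * calHk p k hK hV hI hP

/-- `ℳ_{RE,Ω} := ℳ_RE · (1,1,1,1)ᵀ`. -/
noncomputable def calMREOmega (p : ℕ) (k ρ hK hV hI hP : ℝ) : Fin 4 → ℝ :=
  (calMRE p k ρ hK hV hI hP).mulVec fun _ => 1

set_option maxHeartbeats 2000000 in
lemma calMRE_eq (p : ℕ) (k ρ hK hV hI hP : ℝ) :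
    calMRE p k ρ hK hV hI hP =
    (fun a b c d s => !![
      a + (ρ + b^2*s^2)*a^2,
      (s + b^2*s*k + b^2*s*c^2*k^2)*b^2,
      (b^2*s*k + b^2*s*c^2*k^2)*c^2, 0;
      (a^2*s*ρ + s)*a^2,
      b + (a^2*s^2 + k + c^2*k^2)*b^2,
      (k + c^2*k^2)*c^2, 0;
      (a^2*s*b^2*k*ρ + b^2*k*s)*a^2,
      (a^2*b^2*k*s^2 + b^2*k^2 + k)*b^2,
      c + (b^2*k^2 + k)*c^2, 0;
      0, 0, 0, d + d^2])
      ((hK*k)^p) ((hV*k)^p) ((hI*k)^p) ((hP*k)^p) (Real.sqrt (k*ρ)) := by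
  have h2 : ∀ x : ℝ, x ^ (2*p) = (x^p)^2 := fun x => by rw [mul_comm, pow_mul]
  ext i j
  fin_cases i <;> fin_cases j <;>
    · simp (config := { decide := true }) [calMRE, calM, calT, calC, calHk, Matrix.mul_diagonal,
        Matrix.add_apply, Matrix.one_apply, Matrix.mul_apply, Fin.sum_univ_four, h2,
        Matrix.diagonal_apply, Matrix.vecMul, dotProduct,
        Matrix.vecHead, Matrix.vecTail]
      try ring_nf

set_option maxHeartbeats 4000000 in
/-- Corollary 1.4 (bound on the relative error for the coarsest meshes). -/
theorem coarsest_mesh_relative_error_bound (p : ℕ) (hp : 1 ≤ p) (c₀ : ℝ) (hc₀ : 0 < c₀) :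
    ∃ C : ℝ, 0 < C ∧
      ∀ ε : ℝ, 0 < ε → ε ≤ c₀ →
      ∀ k ρ hK hV hI hP : ℝ, 1 ≤ k → k ≤ ρ →
        0 < hK → 0 < hV → 0 < hI → 0 < hP →
        (hK * k) ^ (2 * p) * ρ + (hV * k) ^ (2 * p) * k + (hI * k) ^ (2 * p) * k
            + (hP * k) ^ (2 * p) ≤ ε →
        (∀ i j : Fin 4, calMRE p k ρ hK hV hI hP i j ≤
            C * Real.sqrt ε *
              !![1, Real.sqrt (ρ / k), Real.sqrt (ρ / k), 0;
                 Real.sqrt (k / ρ), 1, 1, 0;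
                 Real.sqrt (k / ρ), 1, 1, 0;
                 0, 0, 0, 1] i j) ∧
        (∀ i : Fin 4, calMREOmega p k ρ hK hV hI hP i ≤
            C * Real.sqrt ε * ![Real.sqrt (ρ / k), 1, 1, 1] i) := by
  refine ⟨400 * (1 + c₀)^6, by positivity, ?_⟩
  intro ε hε hεc k ρ hK hV hI hP hk hkρ hhK hhV hhI hhP hsum
  have hk0 : (0:ℝ) < k := lt_of_lt_of_le one_pos hk
  have hρ1 : (1:ℝ) ≤ ρ := hk.trans hkρ
  have hρ0 : (0:ℝ) < ρ := lt_of_lt_of_le one_pos hρ1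
  have h2 : ∀ x : ℝ, x ^ (2*p) = (x^p)^2 := fun x => by rw [mul_comm, pow_mul]
  rw [h2, h2, h2, h2] at hsum
  set a := (hK*k)^p with hadef
  set b := (hV*k)^p with hbdef
  set c := (hI*k)^p with hcdef
  set d := (hP*k)^p with hddef
  have ha0 : 0 < a := pow_pos (mul_pos hhK hk0) p
  have hb0 : 0 < b := pow_pos (mul_pos hhV hk0) p
  have hc0 : 0 < c := pow_pos (mul_pos hhI hk0) p
  have hd0 : 0 < d := pow_pos (mul_pos hhP hk0) p
  set e := Real.sqrt ε with hedef
  have he0 : 0 < e := Real.sqrt_pos.2 hε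
  have he2 : e^2 = ε := Real.sq_sqrt hε.le
  set u := Real.sqrt k with hudef
  set v := Real.sqrt ρ with hvdef
  have hu2 : u^2 = k := Real.sq_sqrt hk0.le
  have hv2 : v^2 = ρ := Real.sq_sqrt hρ0.le
  have hu1 : (1:ℝ) ≤ u := Real.one_le_sqrt.2 hk
  have huv : u ≤ v := Real.sqrt_le_sqrt hkρ
  have hv1 : (1:ℝ) ≤ v := hu1.trans huv
  have hu0 : (0:ℝ) < u := lt_of_lt_of_le one_pos hu1
  have hv0 : (0:ℝ) < v := lt_of_lt_of_le one_pos hv1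
  have hsq : Real.sqrt (k*ρ) = u*v := by rw [hudef, hvdef]; exact Real.sqrt_mul hk0.le ρ
  have hqr : Real.sqrt (ρ/k) = v/u := by rw [hudef, hvdef]; exact Real.sqrt_div hρ0.le k
  have hqk : Real.sqrt (k/ρ) = u/v := by rw [hudef, hvdef]; exact Real.sqrt_div hk0.le ρ
  have hvu1 : (1:ℝ) ≤ v/u := (one_le_div hu0).2 huv
  have huv1 : u/v ≤ 1 := (div_le_one hv0).2 huv
  set Q := 1 + c₀ with hQdef
  clear_value a b c d e u v Q
  have hQ1 : (1:ℝ) ≤ Q := by rw [hQdef]; linarith only [hc₀.le]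
  have heQ : e ≤ Q := by
    rw [hQdef]; linarith only [he2, hεc, hc₀.le, sq_nonneg (e - 1)]
  rw [← hu2, ← hv2, ← he2] at hsum
  -- basic bounds
  have hA : a^2*v^2 ≤ e^2 := by linarith only [hsum, sq_nonneg (b*u), sq_nonneg (c*u), sq_nonneg d]
  have hB : b^2*u^2 ≤ e^2 := by linarith only [hsum, sq_nonneg (a*v), sq_nonneg (c*u), sq_nonneg d]
  have hC : c^2*u^2 ≤ e^2 := by linarith only [hsum, sq_nonneg (a*v), sq_nonneg (b*u), sq_nonneg d]
  have hD : d^2 ≤ e^2 := by linarith only [hsum, sq_nonneg (a*v), sq_nonneg (b*u), sq_nonneg (c*u)]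
  have hv21 : (1:ℝ) ≤ v^2 := by nlinarith only [hv1]
  have hu21 : (1:ℝ) ≤ u^2 := by nlinarith only [hu1]
  have ha2e : a^2 ≤ e^2 := by nlinarith only [hA, hv21, sq_nonneg a]
  have hb2e : b^2 ≤ e^2 := by nlinarith only [hB, hu21, sq_nonneg b]
  have hc2e : c^2 ≤ e^2 := by nlinarith only [hC, hu21, sq_nonneg c]
  have ha : a ≤ e := by nlinarith only [ha2e, ha0, he0]
  have hb : b ≤ e := by nlinarith only [hb2e, hb0, he0]
  have hc : c ≤ e := by nlinarith only [hc2e, hc0, he0]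
  have hd : d ≤ e := by nlinarith only [hD, hd0, he0]
  have hQe2 : e^2 ≤ Q*e := by nlinarith only [heQ, he0.le]
  have hAq : a^2*v^2 ≤ Q*e := hA.trans hQe2
  have hBq : b^2*u^2 ≤ Q*e := hB.trans hQe2
  have hCq : c^2*u^2 ≤ Q*e := hC.trans hQe2
  have hDq : d^2 ≤ Q*e := hD.trans hQe2
  have hAq2 : a^2*v^2 ≤ Q^2 := by nlinarith only [hA, heQ, he0.le]
  have hBq2 : b^2*u^2 ≤ Q^2 := by nlinarith only [hB, heQ, he0.le]
  have hCq2 : c^2*u^2 ≤ Q^2 := by nlinarith only [hC, heQ, he0.le]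
  -- degree-2 products
  have hAA : (a^2*v^2)*(a^2*v^2) ≤ Q^3*e := by
    have h := mul_le_mul hAq2 hAq (by positivity) (by positivity : (0:ℝ) ≤ Q^2); linarith only [h, sq_nonneg Q]
  have hAB : (a^2*v^2)*(b^2*u^2) ≤ Q^3*e := by
    have h := mul_le_mul hAq2 hBq (by positivity) (by positivity : (0:ℝ) ≤ Q^2); linarith only [h]
  have hBB : (b^2*u^2)*(b^2*u^2) ≤ Q^3*e := by
    have h := mul_le_mul hBq2 hBq (by positivity) (by positivity : (0:ℝ) ≤ Q^2); linarith only [h]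
  have hBC : (b^2*u^2)*(c^2*u^2) ≤ Q^3*e := by
    have h := mul_le_mul hBq2 hCq (by positivity) (by positivity : (0:ℝ) ≤ Q^2); linarith only [h]
  have hCC : (c^2*u^2)*(c^2*u^2) ≤ Q^3*e := by
    have h := mul_le_mul hCq2 hCq (by positivity) (by positivity : (0:ℝ) ≤ Q^2); linarith only [h]
  -- degree-3 products
  have hQ4 : (0:ℝ) ≤ Q^4 := by positivity
  have hAAB : (a^2*v^2)*(a^2*v^2)*(b^2*u^2) ≤ Q^5*e := by
    have h := mul_le_mul (mul_le_mul hAq2 hAq2 (by positivity) (by positivity : (0:ℝ) ≤ Q^2))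
      hBq (by positivity) (by positivity)
    linarith only [h]
  have hABB : (a^2*v^2)*(b^2*u^2)*(b^2*u^2) ≤ Q^5*e := by
    have h := mul_le_mul (mul_le_mul hAq2 hBq2 (by positivity) (by positivity : (0:ℝ) ≤ Q^2))
      hBq (by positivity) (by positivity)
    linarith only [h]
  have hBBC : (b^2*u^2)*(b^2*u^2)*(c^2*u^2) ≤ Q^5*e := by
    have h := mul_le_mul (mul_le_mul hBq2 hBq2 (by positivity) (by positivity : (0:ℝ) ≤ Q^2))
      hCq (by positivity) (by positivity)
    linarith only [h]
  have hBCC : (b^2*u^2)*(c^2*u^2)*(c^2*u^2) ≤ Q^5*e := by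
    have h := mul_le_mul (mul_le_mul hBq2 hCq2 (by positivity) (by positivity : (0:ℝ) ≤ Q^2))
      hCq (by positivity) (by positivity)
    linarith only [h]
  -- power comparisons
  have hq0 : e ≤ Q^6*e := by nlinarith only [one_le_pow₀ hQ1 (n := 6), he0.le]
  have hq1 : Q*e ≤ Q^6*e := by nlinarith only [pow_le_pow_right₀ hQ1 (show 1 ≤ 6 by norm_num), he0.le]
  have hq3 : Q^3*e ≤ Q^6*e := by nlinarith only [pow_le_pow_right₀ hQ1 (show 3 ≤ 6 by norm_num), he0.le]
  have hq5 : Q^5*e ≤ Q^6*e := by nlinarith only [pow_le_pow_right₀ hQ1 (show 5 ≤ 6 by norm_num), he0.le]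
  have hQ6e0 : (0:ℝ) ≤ Q^6*e := by positivity
  have hE6 : e ≤ Q^6*e := hq0
  have hA6 : a^2*v^2 ≤ Q^6*e := hAq.trans hq1
  have hB6 : b^2*u^2 ≤ Q^6*e := hBq.trans hq1
  have hC6 : c^2*u^2 ≤ Q^6*e := hCq.trans hq1
  have hD6 : d^2 ≤ Q^6*e := hDq.trans hq1
  have hAA6 : (a^2*v^2)*(a^2*v^2) ≤ Q^6*e := hAA.trans hq3
  have hAB6 : (a^2*v^2)*(b^2*u^2) ≤ Q^6*e := hAB.trans hq3
  have hBB6 : (b^2*u^2)*(b^2*u^2) ≤ Q^6*e := hBB.trans hq3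
  have hBC6 : (b^2*u^2)*(c^2*u^2) ≤ Q^6*e := hBC.trans hq3
  have hCC6 : (c^2*u^2)*(c^2*u^2) ≤ Q^6*e := hCC.trans hq3
  have hAAB6 : (a^2*v^2)*(a^2*v^2)*(b^2*u^2) ≤ Q^6*e := hAAB.trans hq5
  have hABB6 : (a^2*v^2)*(b^2*u^2)*(b^2*u^2) ≤ Q^6*e := hABB.trans hq5
  have hBBC6 : (b^2*u^2)*(b^2*u^2)*(c^2*u^2) ≤ Q^6*e := hBBC.trans hq5
  have hBCC6 : (b^2*u^2)*(c^2*u^2)*(c^2*u^2) ≤ Q^6*e := hBCC.trans hq5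
  -- the key componentwise bound with constant 100 Q^6
  have hm : ∀ i j : Fin 4, calMRE p k ρ hK hV hI hP i j ≤
      (100*Q^6) * e *
        !![1, v/u, v/u, 0; u/v, 1, 1, 0; u/v, 1, 1, 0; 0, 0, 0, 1] i j := by
    intro i j
    rw [calMRE_eq, hsq, ← hadef, ← hbdef, ← hcdef, ← hddef, ← hu2, ← hv2]
    fin_cases i <;> fin_cases j <;> simp
    · -- (0,0) : a + (v² + b²(uv)²)a²
      linarith only [ha, hE6, hA6, hAB6, hQ6e0]
    · -- (0,1)
      rw [show (100*Q^6*e*(v/u)) = (100*Q^6*e*v)/u by ring, le_div_iff₀ hu0]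
      have key : (b^2*u^2) + (b^2*u^2)*(b^2*u^2) + (b^2*u^2)*(b^2*u^2)*(c^2*u^2)
          ≤ 100*Q^6*e := by linarith only [hB6, hBB6, hBBC6, hQ6e0]
      linarith only [mul_le_mul_of_nonneg_left key hv0.le]
    · -- (0,2)
      rw [show (100*Q^6*e*(v/u)) = (100*Q^6*e*v)/u by ring, le_div_iff₀ hu0]
      have key : (b^2*u^2)*(c^2*u^2) + (b^2*u^2)*(c^2*u^2)*(c^2*u^2)
          ≤ 100*Q^6*e := by linarith only [hBC6, hBCC6, hQ6e0]
      linarith only [mul_le_mul_of_nonneg_left key hv0.le]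
    · -- (1,0)
      rw [show (100*Q^6*e*(u/v)) = (100*Q^6*e*u)/v by ring, le_div_iff₀ hv0]
      have key : (a^2*v^2)*(a^2*v^2) + (a^2*v^2) ≤ 100*Q^6*e := by
        linarith only [hA6, hAA6, hQ6e0]
      linarith only [mul_le_mul_of_nonneg_left key hu0.le]
    · -- (1,1)
      linarith only [hb, hE6, hB6, hAB6, hBC6, hQ6e0]
    · -- (1,2)
      linarith only [hC6, hCC6, hQ6e0]
    · -- (2,0)
      rw [show (100*Q^6*e*(u/v)) = (100*Q^6*e*u)/v by ring, le_div_iff₀ hv0]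
      have key : (a^2*v^2)*(a^2*v^2)*(b^2*u^2) + (a^2*v^2)*(b^2*u^2) ≤ 100*Q^6*e := by
        linarith only [hAB6, hAAB6, hQ6e0]
      linarith only [mul_le_mul_of_nonneg_left key hu0.le]
    · -- (2,1)
      linarith only [hB6, hBB6, hABB6, hQ6e0]
    · -- (2,2)
      linarith only [hc, hE6, hC6, hBC6, hQ6e0]
    · -- (3,3)
      linarith only [hd, hE6, hD6, hQ6e0]
  have hKe0 : (0:ℝ) < 100*Q^6*e := by positivity
  constructor
  · intro i j
    refine (hm i j).trans ?_
    have hBnn : (0:ℝ) ≤ !![1, v/u, v/u, 0; u/v, 1, 1, 0; u/v, 1, 1, 0; 0, 0, 0, 1] i j ∧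
        !![(1:ℝ), Real.sqrt (ρ/k), Real.sqrt (ρ/k), 0; Real.sqrt (k/ρ), 1, 1, 0;
           Real.sqrt (k/ρ), 1, 1, 0; 0, 0, 0, 1] i j =
        !![1, v/u, v/u, 0; u/v, 1, 1, 0; u/v, 1, 1, 0; 0, 0, 0, 1] i j := by
      fin_cases i <;> fin_cases j <;> simp [hqr, hqk] <;> positivity
    rw [hBnn.2]
    have : (100*Q^6)*e ≤ (400*Q^6)*e := by linarith only [hQ6e0]
    exact mul_le_mul_of_nonneg_right this hBnn.1
  · intro i
    have h00 := hm 0 0; have h01 := hm 0 1; have h02 := hm 0 2; have h03 := hm 0 3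
    have h10 := hm 1 0; have h11 := hm 1 1; have h12 := hm 1 2; have h13 := hm 1 3
    have h20 := hm 2 0; have h21 := hm 2 1; have h22 := hm 2 2; have h23 := hm 2 3
    have h30 := hm 3 0; have h31 := hm 3 1; have h32 := hm 3 2; have h33 := hm 3 3
    simp at h00 h01 h02 h03 h10 h11 h12 h13 h20 h21 h22 h23 h30 h31 h32 h33
    have hone : (100*Q^6*e)*1 ≤ (100*Q^6*e)*(v/u) := by
      exact mul_le_mul_of_nonneg_left hvu1 hKe0.le
    have huvle : (100*Q^6*e)*(u/v) ≤ (100*Q^6*e)*1 := by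
      exact mul_le_mul_of_nonneg_left huv1 hKe0.le
    fin_cases i <;>
      simp [calMREOmega, Matrix.mulVec, dotProduct, Fin.sum_univ_four, hqr]
    · have hpos : (0:ℝ) ≤ (100*Q^6*e)*(v/u) := by positivity
      exact le_trans (add_le_add (add_le_add (add_le_add h00 h01) h02) h03)
        (by linarith only [hone, hpos])
    · refine le_trans (add_le_add (add_le_add (add_le_add h10 h11) h12) h13) ?_
      show (100*Q^6*e)*(u/v) + 100*Q^6*e + 100*Q^6*e + 0 ≤ 400*Q^6*e
      linarith only [huvle, hKe0.le]
    · refine le_trans (add_le_add (add_le_add (add_le_add h20 h21) h22) h23) ?_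
      show (100*Q^6*e)*(u/v) + 100*Q^6*e + 100*Q^6*e + 0 ≤ 400*Q^6*e
      linarith only [huvle, hKe0.le]
    · exact le_trans (add_le_add (add_le_add (add_le_add h30 h31) h32) h33)
        (by linarith only [hKe0.le])
end

section
/- For every integer p ≥ 1 and every c₀ > 0 there exists C > 0 such that the following holds: for all real numbers k ≥ 1, ρ ≥ k and h > 0 with (hk)^p ρ ≤ c₀, taking the uniform meshwidths h_K = h_V = h_I = h_P = h, one has, componentwise, ℳ ≤ C·[the 4×4 matrix with rows (1, √(k/ρ), (k/ρ)^{3/2}ρ^{-1}, 0), (√(k/ρ), 1, k/ρ, 0), ((k/ρ)^{3/2}ρ^{-1}, k/ρ, 1, 0), (0, 0, 0, 1)]. (Paper's Corollary on asymptotic estimates for uniform meshes, Corollary 1.5.) -/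
set_option maxHeartbeats 4000000


/-- Corollary 1.5 (asymptotic estimates for uniform meshes). -/
theorem uniform_mesh_asymptotic_bound (p : ℕ) (hp : 1 ≤ p) (c₀ : ℝ) (hc₀ : 0 < c₀) :
    ∃ C : ℝ, 0 < C ∧
      ∀ k ρ h : ℝ, 1 ≤ k → k ≤ ρ → 0 < h →
        (h * k) ^ p * ρ ≤ c₀ →
        ∀ i j : Fin 4, calM p k ρ h h h h i j ≤
          C * !![1, Real.sqrt (k / ρ), Real.sqrt ((k / ρ) ^ 3) / ρ, 0;
                 Real.sqrt (k / ρ), 1, k / ρ, 0;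
                 Real.sqrt ((k / ρ) ^ 3) / ρ, k / ρ, 1, 0;
                 0, 0, 0, 1] i j := by
  refine ⟨(1 + c₀) ^ 5, by positivity, ?_⟩
  intro k ρ h hk1 hkρ hh hsmall i j
  have hk0 : (0:ℝ) < k := by linarith
  have hρ0 : (0:ℝ) < ρ := by linarith
  have hρ1 : (1:ℝ) ≤ ρ := by linarith
  set C := (1 + c₀) ^ 5 with hCdef
  set E := (h * k) ^ p with hEdef
  have hE0 : 0 < E := by rw [hEdef]; positivity
  have hE2 : (h * k) ^ (2 * p) = E ^ 2 := by rw [hEdef, mul_comm 2 p, pow_mul]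
  have hss : Real.sqrt (k * ρ) * Real.sqrt (k * ρ) = k * ρ :=
    Real.mul_self_sqrt (by positivity)
  have hs0 : 0 ≤ Real.sqrt (k * ρ) := Real.sqrt_nonneg _
  have hs3 : Real.sqrt (k * ρ) ^ 3 = k * ρ * Real.sqrt (k * ρ) := by
    rw [pow_succ, sq, hss]
  have hsq : Real.sqrt (k / ρ) = Real.sqrt (k * ρ) / ρ := by
    rw [show k / ρ = (k * ρ) / ρ ^ 2 by field_simp,
      Real.sqrt_div (by positivity), Real.sqrt_sq hρ0.le]
  have hsq3 : Real.sqrt ((k / ρ) ^ 3) = Real.sqrt (k * ρ) ^ 3 / ρ ^ 3 := by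
    have hq : Real.sqrt (k * ρ) ^ 2 = k * ρ := Real.sq_sqrt (by positivity)
    have h2 : (Real.sqrt (k * ρ) ^ 3 / ρ ^ 3) ^ 2 = (k / ρ) ^ 3 := by
      calc (Real.sqrt (k * ρ) ^ 3 / ρ ^ 3) ^ 2
          = (Real.sqrt (k * ρ) ^ 2) ^ 3 / (ρ ^ 2) ^ 3 := by ring
        _ = (k * ρ) ^ 3 / (ρ ^ 2) ^ 3 := by rw [hq]
        _ = (k / ρ) ^ 3 := by
            rw [div_pow, div_eq_div_iff (by positivity) (by positivity)]; ring
    rw [← h2, Real.sqrt_sq (by positivity)]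
  have M1 : E * ρ ≤ c₀ := hsmall
  have M2 : E * k ≤ c₀ := le_trans (by nlinarith) M1
  have M3 : E ≤ c₀ := le_trans (by nlinarith) M1
  have key : ∀ a b d : ℕ, (E * ρ) ^ a * ((E * k) ^ b * E ^ d) ≤ c₀ ^ (a + b + d) := by
    intro a b d
    calc (E * ρ) ^ a * ((E * k) ^ b * E ^ d) ≤ c₀ ^ a * (c₀ ^ b * c₀ ^ d) := by
          gcongr <;> positivity
      _ = c₀ ^ (a + b + d) := by rw [← pow_add, ← pow_add, add_assoc]
  have m4 : E ^ 3 * k * ρ ≤ c₀ ^ 3 := by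
    calc E ^ 3 * k * ρ = (E * ρ) ^ 1 * ((E * k) ^ 1 * E ^ 1) := by ring
      _ ≤ c₀ ^ (1 + 1 + 1) := key 1 1 1
      _ = c₀ ^ 3 := by norm_num
  have m5 : E ^ 5 * k ^ 2 * ρ ≤ c₀ ^ 5 := by
    calc E ^ 5 * k ^ 2 * ρ = (E * ρ) ^ 1 * ((E * k) ^ 2 * E ^ 2) := by ring
      _ ≤ c₀ ^ (1 + 2 + 2) := key 1 2 2
      _ = c₀ ^ 5 := by norm_num
  have m6 : E ^ 3 * ρ ^ 2 ≤ c₀ ^ 3 := by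
    calc E ^ 3 * ρ ^ 2 = (E * ρ) ^ 2 * ((E * k) ^ 0 * E ^ 1) := by ring
      _ ≤ c₀ ^ (2 + 0 + 1) := key 2 0 1
      _ = c₀ ^ 3 := by norm_num
  have m7 : E ^ 5 * k * ρ ^ 2 ≤ c₀ ^ 5 := by
    calc E ^ 5 * k * ρ ^ 2 = (E * ρ) ^ 2 * ((E * k) ^ 1 * E ^ 2) := by ring
      _ ≤ c₀ ^ (2 + 1 + 2) := key 2 1 2
      _ = c₀ ^ 5 := by norm_num
  have m9 : E ^ 3 * ρ ^ 3 ≤ c₀ ^ 3 := by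
    calc E ^ 3 * ρ ^ 3 = (E * ρ) ^ 3 * ((E * k) ^ 0 * E ^ 0) := by ring
      _ ≤ c₀ ^ (3 + 0 + 0) := key 3 0 0
      _ = c₀ ^ 3 := by norm_num
  have m10 : E ^ 5 * k * ρ ^ 3 ≤ c₀ ^ 5 := by
    calc E ^ 5 * k * ρ ^ 3 = (E * ρ) ^ 3 * ((E * k) ^ 1 * E ^ 1) := by ring
      _ ≤ c₀ ^ (3 + 1 + 1) := key 3 1 1
      _ = c₀ ^ 5 := by norm_num
  have m11 : E ^ 3 * k ^ 2 ≤ c₀ ^ 3 := by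
    calc E ^ 3 * k ^ 2 = (E * ρ) ^ 0 * ((E * k) ^ 2 * E ^ 1) := by ring
      _ ≤ c₀ ^ (0 + 2 + 1) := key 0 2 1
      _ = c₀ ^ 3 := by norm_num
  have m12 : E ^ 5 * ρ ^ 4 ≤ c₀ ^ 5 := by
    calc E ^ 5 * ρ ^ 4 = (E * ρ) ^ 4 * ((E * k) ^ 0 * E ^ 1) := by ring
      _ ≤ c₀ ^ (4 + 0 + 1) := key 4 0 1
      _ = c₀ ^ 5 := by norm_num
  have hCa : 1 + c₀ + c₀ ^ 3 + c₀ ^ 5 ≤ C := by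
    rw [hCdef]
    nlinarith [hc₀.le, pow_nonneg hc₀.le 2, pow_nonneg hc₀.le 3, pow_nonneg hc₀.le 4,
      pow_nonneg hc₀.le 5]
  have hc3 : (0:ℝ) ≤ c₀ ^ 3 := by positivity
  have hc5 : (0:ℝ) ≤ c₀ ^ 5 := by positivity
  fin_cases i <;> fin_cases j
  · simp only [calM, calT, calC, calHk, Matrix.mul_diagonal, Matrix.vecMul_diagonal,
      Matrix.mul_apply, Matrix.add_apply, Matrix.one_apply, Fin.sum_univ_four,
      Matrix.cons_val', Matrix.cons_val_zero, Matrix.cons_val_one, Matrix.head_cons,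
      Matrix.empty_val', Matrix.cons_val_fin_one, Matrix.head_fin_const,
      Matrix.cons_val_two, Matrix.cons_val_three, Matrix.tail_cons, Matrix.diagonal_apply,
      Fin.isValue, Matrix.of_apply, Matrix.cons_val, hE2, hsq, hsq3, ← hEdef]
    norm_num [Fin.ext_iff, Matrix.vecHead, Matrix.vecTail]
    have hr : E ^ 3 * (Real.sqrt (k * ρ) * Real.sqrt (k * ρ)) = E ^ 3 * (k * ρ) := by rw [hss]
    nlinarith [hr, M1, m4, hCa, hc3, hc5, hc₀.le]
  · simp only [calM, calT, calC, calHk, Matrix.mul_diagonal, Matrix.vecMul_diagonal,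
      Matrix.mul_apply, Matrix.add_apply, Matrix.one_apply, Fin.sum_univ_four,
      Matrix.cons_val', Matrix.cons_val_zero, Matrix.cons_val_one, Matrix.head_cons,
      Matrix.empty_val', Matrix.cons_val_fin_one, Matrix.head_fin_const,
      Matrix.cons_val_two, Matrix.cons_val_three, Matrix.tail_cons, Matrix.diagonal_apply,
      Fin.isValue, Matrix.of_apply, Matrix.cons_val, hE2, hsq, hsq3, ← hEdef]
    norm_num [Fin.ext_iff, Matrix.vecHead, Matrix.vecTail]
    rw [← mul_div_assoc, le_div_iff₀ hρ0]
    have hX : E * ρ + E ^ 3 * k * ρ + E ^ 5 * k ^ 2 * ρ ≤ C := by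
      nlinarith [M1, m4, m5, hCa, hc3, hc5, hc₀.le]
    nlinarith [mul_le_mul_of_nonneg_left hX hs0]
  · simp only [calM, calT, calC, calHk, Matrix.mul_diagonal, Matrix.vecMul_diagonal,
      Matrix.mul_apply, Matrix.add_apply, Matrix.one_apply, Fin.sum_univ_four,
      Matrix.cons_val', Matrix.cons_val_zero, Matrix.cons_val_one, Matrix.head_cons,
      Matrix.empty_val', Matrix.cons_val_fin_one, Matrix.head_fin_const,
      Matrix.cons_val_two, Matrix.cons_val_three, Matrix.tail_cons, Matrix.diagonal_apply,
      Fin.isValue, Matrix.of_apply, Matrix.cons_val, hE2, hsq, hsq3, ← hEdef]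
    norm_num [Fin.ext_iff, Matrix.vecHead, Matrix.vecTail]
    rw [div_div, ← mul_div_assoc, le_div_iff₀ (by positivity : (0:ℝ) < ρ ^ 3 * ρ), hs3]
    have hX : E ^ 3 * (ρ ^ 3 * ρ) + E ^ 5 * k * (ρ ^ 3 * ρ) ≤ C * ρ := by
      nlinarith [mul_le_mul_of_nonneg_right m9 hρ0.le, mul_le_mul_of_nonneg_right m10 hρ0.le,
        mul_le_mul_of_nonneg_right hCa hρ0.le, mul_nonneg hc3 hρ0.le, mul_nonneg hc5 hρ0.le,
        mul_nonneg hc₀.le hρ0.le, hρ0.le]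
    nlinarith [mul_le_mul_of_nonneg_left hX (mul_nonneg hs0 hk0.le)]
  · simp only [calM, calT, calC, calHk, Matrix.mul_diagonal, Matrix.vecMul_diagonal,
      Matrix.mul_apply, Matrix.add_apply, Matrix.one_apply, Fin.sum_univ_four,
      Matrix.cons_val', Matrix.cons_val_zero, Matrix.cons_val_one, Matrix.head_cons,
      Matrix.empty_val', Matrix.cons_val_fin_one, Matrix.head_fin_const,
      Matrix.cons_val_two, Matrix.cons_val_three, Matrix.tail_cons, Matrix.diagonal_apply,
      Fin.isValue, Matrix.of_apply, Matrix.cons_val, hE2, hsq, hsq3, ← hEdef]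
    norm_num [Fin.ext_iff, Matrix.vecHead, Matrix.vecTail]
  · simp only [calM, calT, calC, calHk, Matrix.mul_diagonal, Matrix.vecMul_diagonal,
      Matrix.mul_apply, Matrix.add_apply, Matrix.one_apply, Fin.sum_univ_four,
      Matrix.cons_val', Matrix.cons_val_zero, Matrix.cons_val_one, Matrix.head_cons,
      Matrix.empty_val', Matrix.cons_val_fin_one, Matrix.head_fin_const,
      Matrix.cons_val_two, Matrix.cons_val_three, Matrix.tail_cons, Matrix.diagonal_apply,
      Fin.isValue, Matrix.of_apply, Matrix.cons_val, hE2, hsq, hsq3, ← hEdef]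
    norm_num [Fin.ext_iff, Matrix.vecHead, Matrix.vecTail]
    rw [← mul_div_assoc, le_div_iff₀ hρ0]
    have hX : E ^ 3 * ρ ^ 2 + E * ρ ≤ C := by nlinarith [m6, M1, hCa, hc3, hc5, hc₀.le]
    nlinarith [mul_le_mul_of_nonneg_left hX hs0]
  · simp only [calM, calT, calC, calHk, Matrix.mul_diagonal, Matrix.vecMul_diagonal,
      Matrix.mul_apply, Matrix.add_apply, Matrix.one_apply, Fin.sum_univ_four,
      Matrix.cons_val', Matrix.cons_val_zero, Matrix.cons_val_one, Matrix.head_cons,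
      Matrix.empty_val', Matrix.cons_val_fin_one, Matrix.head_fin_const,
      Matrix.cons_val_two, Matrix.cons_val_three, Matrix.tail_cons, Matrix.diagonal_apply,
      Fin.isValue, Matrix.of_apply, Matrix.cons_val, hE2, hsq, hsq3, ← hEdef]
    norm_num [Fin.ext_iff, Matrix.vecHead, Matrix.vecTail]
    have hr : E ^ 3 * (Real.sqrt (k * ρ) * Real.sqrt (k * ρ)) = E ^ 3 * (k * ρ) := by rw [hss]
    nlinarith [hr, m4, M2, m11, hCa, hc3, hc5, hc₀.le]
  · simp only [calM, calT, calC, calHk, Matrix.mul_diagonal, Matrix.vecMul_diagonal,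
      Matrix.mul_apply, Matrix.add_apply, Matrix.one_apply, Fin.sum_univ_four,
      Matrix.cons_val', Matrix.cons_val_zero, Matrix.cons_val_one, Matrix.head_cons,
      Matrix.empty_val', Matrix.cons_val_fin_one, Matrix.head_fin_const,
      Matrix.cons_val_two, Matrix.cons_val_three, Matrix.tail_cons, Matrix.diagonal_apply,
      Fin.isValue, Matrix.of_apply, Matrix.cons_val, hE2, hsq, hsq3, ← hEdef]
    norm_num [Fin.ext_iff, Matrix.vecHead, Matrix.vecTail]
    rw [← mul_div_assoc, le_div_iff₀ hρ0]
    have hX : E * ρ + E ^ 3 * k * ρ ≤ C := by nlinarith [M1, m4, hCa, hc3, hc5, hc₀.le]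
    nlinarith [mul_le_mul_of_nonneg_left hX hk0.le]
  · simp only [calM, calT, calC, calHk, Matrix.mul_diagonal, Matrix.vecMul_diagonal,
      Matrix.mul_apply, Matrix.add_apply, Matrix.one_apply, Fin.sum_univ_four,
      Matrix.cons_val', Matrix.cons_val_zero, Matrix.cons_val_one, Matrix.head_cons,
      Matrix.empty_val', Matrix.cons_val_fin_one, Matrix.head_fin_const,
      Matrix.cons_val_two, Matrix.cons_val_three, Matrix.tail_cons, Matrix.diagonal_apply,
      Fin.isValue, Matrix.of_apply, Matrix.cons_val, hE2, hsq, hsq3, ← hEdef]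
    norm_num [Fin.ext_iff, Matrix.vecHead, Matrix.vecTail]
  · simp only [calM, calT, calC, calHk, Matrix.mul_diagonal, Matrix.vecMul_diagonal,
      Matrix.mul_apply, Matrix.add_apply, Matrix.one_apply, Fin.sum_univ_four,
      Matrix.cons_val', Matrix.cons_val_zero, Matrix.cons_val_one, Matrix.head_cons,
      Matrix.empty_val', Matrix.cons_val_fin_one, Matrix.head_fin_const,
      Matrix.cons_val_two, Matrix.cons_val_three, Matrix.tail_cons, Matrix.diagonal_apply,
      Fin.isValue, Matrix.of_apply, Matrix.cons_val, hE2, hsq, hsq3, ← hEdef]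
    norm_num [Fin.ext_iff, Matrix.vecHead, Matrix.vecTail]
    rw [div_div, ← mul_div_assoc, le_div_iff₀ (by positivity : (0:ℝ) < ρ ^ 3 * ρ), hs3]
    have hX : E ^ 5 * ρ * (ρ ^ 3 * ρ) + E ^ 3 * (ρ ^ 3 * ρ) ≤ C * ρ := by
      nlinarith [mul_le_mul_of_nonneg_right m12 hρ0.le, mul_le_mul_of_nonneg_right m9 hρ0.le,
        mul_le_mul_of_nonneg_right hCa hρ0.le, mul_nonneg hc3 hρ0.le, mul_nonneg hc5 hρ0.le,
        mul_nonneg hc₀.le hρ0.le, hρ0.le]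
    nlinarith [mul_le_mul_of_nonneg_left hX (mul_nonneg hs0 hk0.le)]
  · simp only [calM, calT, calC, calHk, Matrix.mul_diagonal, Matrix.vecMul_diagonal,
      Matrix.mul_apply, Matrix.add_apply, Matrix.one_apply, Fin.sum_univ_four,
      Matrix.cons_val', Matrix.cons_val_zero, Matrix.cons_val_one, Matrix.head_cons,
      Matrix.empty_val', Matrix.cons_val_fin_one, Matrix.head_fin_const,
      Matrix.cons_val_two, Matrix.cons_val_three, Matrix.tail_cons, Matrix.diagonal_apply,
      Fin.isValue, Matrix.of_apply, Matrix.cons_val, hE2, hsq, hsq3, ← hEdef]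
    norm_num [Fin.ext_iff, Matrix.vecHead, Matrix.vecTail]
    rw [← mul_div_assoc, le_div_iff₀ hρ0]
    have hr : E ^ 5 * k * ρ * (Real.sqrt (k * ρ) * Real.sqrt (k * ρ)) = E ^ 5 * k * ρ * (k * ρ) := by
      rw [hss]
    nlinarith [hr, mul_le_mul_of_nonneg_left m7 hk0.le, mul_le_mul_of_nonneg_left m4 hk0.le,
      mul_le_mul_of_nonneg_left M1 hk0.le, mul_le_mul_of_nonneg_left hCa hk0.le,
      mul_nonneg hk0.le hc3, mul_nonneg hk0.le hc5, mul_nonneg hk0.le hc₀.le, hk0.le]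
  · simp only [calM, calT, calC, calHk, Matrix.mul_diagonal, Matrix.vecMul_diagonal,
      Matrix.mul_apply, Matrix.add_apply, Matrix.one_apply, Fin.sum_univ_four,
      Matrix.cons_val', Matrix.cons_val_zero, Matrix.cons_val_one, Matrix.head_cons,
      Matrix.empty_val', Matrix.cons_val_fin_one, Matrix.head_fin_const,
      Matrix.cons_val_two, Matrix.cons_val_three, Matrix.tail_cons, Matrix.diagonal_apply,
      Fin.isValue, Matrix.of_apply, Matrix.cons_val, hE2, hsq, hsq3, ← hEdef]
    norm_num [Fin.ext_iff, Matrix.vecHead, Matrix.vecTail]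
    nlinarith [m11, M2, hCa, hc3, hc5, hc₀.le]
  · simp only [calM, calT, calC, calHk, Matrix.mul_diagonal, Matrix.vecMul_diagonal,
      Matrix.mul_apply, Matrix.add_apply, Matrix.one_apply, Fin.sum_univ_four,
      Matrix.cons_val', Matrix.cons_val_zero, Matrix.cons_val_one, Matrix.head_cons,
      Matrix.empty_val', Matrix.cons_val_fin_one, Matrix.head_fin_const,
      Matrix.cons_val_two, Matrix.cons_val_three, Matrix.tail_cons, Matrix.diagonal_apply,
      Fin.isValue, Matrix.of_apply, Matrix.cons_val, hE2, hsq, hsq3, ← hEdef]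
    norm_num [Fin.ext_iff, Matrix.vecHead, Matrix.vecTail]
  · simp only [calM, calT, calC, calHk, Matrix.mul_diagonal, Matrix.vecMul_diagonal,
      Matrix.mul_apply, Matrix.add_apply, Matrix.one_apply, Fin.sum_univ_four,
      Matrix.cons_val', Matrix.cons_val_zero, Matrix.cons_val_one, Matrix.head_cons,
      Matrix.empty_val', Matrix.cons_val_fin_one, Matrix.head_fin_const,
      Matrix.cons_val_two, Matrix.cons_val_three, Matrix.tail_cons, Matrix.diagonal_apply,
      Fin.isValue, Matrix.of_apply, Matrix.cons_val, hE2, hsq, hsq3, ← hEdef]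
    norm_num [Fin.ext_iff, Matrix.vecHead, Matrix.vecTail]
  · simp only [calM, calT, calC, calHk, Matrix.mul_diagonal, Matrix.vecMul_diagonal,
      Matrix.mul_apply, Matrix.add_apply, Matrix.one_apply, Fin.sum_univ_four,
      Matrix.cons_val', Matrix.cons_val_zero, Matrix.cons_val_one, Matrix.head_cons,
      Matrix.empty_val', Matrix.cons_val_fin_one, Matrix.head_fin_const,
      Matrix.cons_val_two, Matrix.cons_val_three, Matrix.tail_cons, Matrix.diagonal_apply,
      Fin.isValue, Matrix.of_apply, Matrix.cons_val, hE2, hsq, hsq3, ← hEdef]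
    norm_num [Fin.ext_iff, Matrix.vecHead, Matrix.vecTail]
  · simp only [calM, calT, calC, calHk, Matrix.mul_diagonal, Matrix.vecMul_diagonal,
      Matrix.mul_apply, Matrix.add_apply, Matrix.one_apply, Fin.sum_univ_four,
      Matrix.cons_val', Matrix.cons_val_zero, Matrix.cons_val_one, Matrix.head_cons,
      Matrix.empty_val', Matrix.cons_val_fin_one, Matrix.head_fin_const,
      Matrix.cons_val_two, Matrix.cons_val_three, Matrix.tail_cons, Matrix.diagonal_apply,
      Fin.isValue, Matrix.of_apply, Matrix.cons_val, hE2, hsq, hsq3, ← hEdef]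
    norm_num [Fin.ext_iff, Matrix.vecHead, Matrix.vecTail]
  · simp only [calM, calT, calC, calHk, Matrix.mul_diagonal, Matrix.vecMul_diagonal,
      Matrix.mul_apply, Matrix.add_apply, Matrix.one_apply, Fin.sum_univ_four,
      Matrix.cons_val', Matrix.cons_val_zero, Matrix.cons_val_one, Matrix.head_cons,
      Matrix.empty_val', Matrix.cons_val_fin_one, Matrix.head_fin_const,
      Matrix.cons_val_two, Matrix.cons_val_three, Matrix.tail_cons, Matrix.diagonal_apply,
      Fin.isValue, Matrix.of_apply, Matrix.cons_val, hE2, hsq, hsq3, ← hEdef]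
    norm_num [Fin.ext_iff, Matrix.vecHead, Matrix.vecTail]
    nlinarith [M3, hCa, hc3, hc5, hc₀.le]
end

section
/- For every integer p ≥ 1 and every c₀ > 0 there exists C > 0 such that the following holds: for all real numbers k ≥ 1, ρ ≥ k and h_K, h_V, h_I, h_P > 0 satisfying (h_K k)^p ρ + (h_V k)^p √(kρ) + (h_I k)^p k + (h_P k)^p ≤ c₀, one has, componentwise, ℳ ≤ C·[the 4×4 matrix with rows (1, 1, (kρ)^{-1/2}, 0), (√(k/ρ), 1, 1, 0), (ρ^{-1}√(k/ρ), √(k/ρ), 1, 0), (0, 0, 0, 1)]. (Paper's Corollary giving the threshold for k-uniform quasi-optimality, Corollary 1.7.) -/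
private lemma mul_le4 {x y X Y : ℝ} (hx : 0 ≤ x) (hX : x ≤ X) (hy : 0 ≤ y) (hY : y ≤ Y) :
    x * y ≤ X * Y := mul_le_mul hX hY hy (hx.trans hX)

set_option maxHeartbeats 2000000 in
private lemma calM_eq (p : ℕ) (k ρ hK hV hI hP : ℝ) (hkρ : 0 ≤ k * ρ) :
    calM p k ρ hK hV hI hP =
    !![1 + (hK * k) ^ p * ρ * (1 + ((hV * k) ^ p) ^ 2 * k),
         (hV * k) ^ p * Real.sqrt (k * ρ) *
           (1 + ((hV * k) ^ p) ^ 2 * k + ((hV * k) ^ p) ^ 2 * ((hI * k) ^ p) ^ 2 * k ^ 2),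
         (hI * k) ^ p * ((hV * k) ^ p) ^ 2 * Real.sqrt (k * ρ) * k *
           (1 + ((hI * k) ^ p) ^ 2 * k), 0;
       (hK * k) ^ p * Real.sqrt (k * ρ) * (((hK * k) ^ p) ^ 2 * ρ + 1),
         1 + (hV * k) ^ p * k * (((hK * k) ^ p) ^ 2 * ρ + 1 + ((hI * k) ^ p) ^ 2 * k),
         (hI * k) ^ p * k * (1 + ((hI * k) ^ p) ^ 2 * k), 0;
       (hK * k) ^ p * ((hV * k) ^ p) ^ 2 * k * Real.sqrt (k * ρ) * (((hK * k) ^ p) ^ 2 * ρ + 1),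
         (hV * k) ^ p * k *
           (((hK * k) ^ p) ^ 2 * ((hV * k) ^ p) ^ 2 * k * ρ + ((hV * k) ^ p) ^ 2 * k + 1),
         1 + (hI * k) ^ p * k * (((hV * k) ^ p) ^ 2 * k + 1), 0;
       0, 0, 0, 1 + (hP * k) ^ p] := by
  have h2 : ∀ x : ℝ, x ^ (2 * p) = (x ^ p) ^ 2 := fun x => by rw [mul_comm, pow_mul]
  ext i j
  fin_cases i <;> fin_cases j <;>
    simp [calM, calT, calC, calHk, Matrix.mul_apply, Fin.sum_univ_four, Matrix.one_apply,
      Matrix.diagonal_apply, Matrix.vecMul_diagonal, h2] <;>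
    (try ring_nf) <;>
    simp only [Real.sq_sqrt hkρ, Real.sq_sqrt (show (0:ℝ) ≤ ρ * k by nlinarith)] <;>
    (try ring_nf)

set_option maxHeartbeats 1000000 in
/-- Corollary 1.7 (threshold for k-uniform quasi-optimality). -/
theorem quasioptimality_threshold_bound (p : ℕ) (hp : 1 ≤ p) (c₀ : ℝ) (hc₀ : 0 < c₀) :
    ∃ C : ℝ, 0 < C ∧
      ∀ k ρ hK hV hI hP : ℝ, 1 ≤ k → k ≤ ρ →
        0 < hK → 0 < hV → 0 < hI → 0 < hP →
        (hK * k) ^ p * ρ + (hV * k) ^ p * Real.sqrt (k * ρ) + (hI * k) ^ p * k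
            + (hP * k) ^ p ≤ c₀ →
        ∀ i j : Fin 4, calM p k ρ hK hV hI hP i j ≤
          C * !![1, 1, (Real.sqrt (k * ρ))⁻¹, 0;
                 Real.sqrt (k / ρ), 1, 1, 0;
                 Real.sqrt (k / ρ) / ρ, Real.sqrt (k / ρ), 1, 0;
                 0, 0, 0, 1] i j := by
  refine ⟨2 * (1 + c₀) ^ 5, by positivity, ?_⟩
  set C := 2 * (1 + c₀) ^ 5 with hCdef
  have hCbig : 1 + c₀ + c₀ ^ 2 + c₀ ^ 3 + c₀ ^ 4 + c₀ ^ 5 ≤ C := by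
    rw [hCdef]
    nlinarith [pow_pos hc₀ 2, pow_pos hc₀ 3, pow_pos hc₀ 4, pow_pos hc₀ 5, hc₀.le]
  have hP1 : 1 + c₀ * (1 + c₀ ^ 2) ≤ C := by nlinarith [hCbig, pow_pos hc₀ 2, pow_pos hc₀ 4]
  have hP2 : c₀ * (1 + c₀ ^ 2 + c₀ ^ 2 * c₀ ^ 2) ≤ C := by
    nlinarith [hCbig, hc₀.le, pow_pos hc₀ 2, pow_pos hc₀ 4]
  have hP3 : c₀ * c₀ ^ 2 * (1 + c₀ ^ 2) ≤ C := by
    nlinarith [hCbig, hc₀.le, pow_pos hc₀ 2, pow_pos hc₀ 4]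
  have hP4 : c₀ * (c₀ ^ 2 + 1) ≤ C := by nlinarith [hCbig, hc₀.le, pow_pos hc₀ 2, pow_pos hc₀ 4]
  have hP5 : 1 + c₀ * (c₀ ^ 2 + 1 + c₀ ^ 2) ≤ C := by
    nlinarith [hCbig, hc₀.le, pow_pos hc₀ 2, pow_pos hc₀ 4]
  have hP6 : c₀ * c₀ ^ 2 * (c₀ ^ 2 + 1) ≤ C := by
    nlinarith [hCbig, hc₀.le, pow_pos hc₀ 2, pow_pos hc₀ 4]
  have hP7 : c₀ * (c₀ ^ 2 * c₀ ^ 2 + c₀ ^ 2 + 1) ≤ C := by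
    nlinarith [hCbig, hc₀.le, pow_pos hc₀ 2, pow_pos hc₀ 4]
  have hP8 : 1 + c₀ ≤ C := by nlinarith [hCbig, pow_pos hc₀ 2, pow_pos hc₀ 3, pow_pos hc₀ 4, pow_pos hc₀ 5]
  have hC0 : 0 < C := by positivity
  intro k ρ hK hV hI hP hk hkρ hhK hhV hhI hhP hbound i j
  have hk0 : (0:ℝ) < k := lt_of_lt_of_le one_pos hk
  have hρ0 : (0:ℝ) < ρ := lt_of_lt_of_le hk0 hkρ
  have hρ1 : (1:ℝ) ≤ ρ := hk.trans hkρ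
  have hkρ0 : (0:ℝ) ≤ k * ρ := by positivity
  set s := Real.sqrt (k * ρ) with hsdef
  have hs2 : s ^ 2 = k * ρ := Real.sq_sqrt hkρ0
  have hs0 : (0:ℝ) < s := Real.sqrt_pos.mpr (by positivity)
  have hks : k ≤ s := by nlinarith [hs2, hs0, hk0]
  have hsρ : s ≤ ρ := by nlinarith [hs2, hs0, hρ0]
  have hsd : Real.sqrt (k / ρ) = s / ρ := by
    rw [show k / ρ = k * ρ / ρ ^ 2 by field_simp, hsdef,
      Real.sqrt_div hkρ0, Real.sqrt_sq hρ0.le]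
  rw [calM_eq p k ρ hK hV hI hP hkρ0, hsd]
  set a := (hK * k) ^ p with hadef
  set b := (hV * k) ^ p with hbdef
  set c := (hI * k) ^ p with hcdef
  set d := (hP * k) ^ p with hddef
  have ha0 : 0 < a := by rw [hadef]; positivity
  have hb0 : 0 < b := by rw [hbdef]; positivity
  have hc0 : 0 < c := by rw [hcdef]; positivity
  have hd0 : 0 < d := by rw [hddef]; positivity
  have ha : a * ρ ≤ c₀ := by linarith [mul_pos hb0 hs0, mul_pos hc0 hk0, hd0]
  have hb : b * s ≤ c₀ := by linarith [mul_pos ha0 hρ0, mul_pos hc0 hk0, hd0]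
  have hc : c * k ≤ c₀ := by linarith [mul_pos ha0 hρ0, mul_pos hb0 hs0, hd0]
  have hd : d ≤ c₀ := by linarith [mul_pos ha0 hρ0, mul_pos hb0 hs0, mul_pos hc0 hk0]
  have haρ0 : (0:ℝ) ≤ a * ρ := by positivity
  have hA2 : a ^ 2 * ρ ≤ c₀ ^ 2 := by
    have h1 := mul_le4 haρ0 ha haρ0 ha
    have h2 : a ^ 2 * ρ ≤ a ^ 2 * ρ * ρ :=
      le_mul_of_one_le_right (by positivity) hρ1
    linarith
  have hB2ρ : b ^ 2 * (k * ρ) ≤ c₀ ^ 2 := by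
    have h1 := mul_le4 (mul_nonneg hb0.le hs0.le) hb (mul_nonneg hb0.le hs0.le) hb
    have e : b ^ 2 * (k * ρ) = b * s * (b * s) := by rw [← hs2]; ring
    linarith [e ▸ h1]
  have hB2 : b ^ 2 * k ≤ c₀ ^ 2 := by
    have h2 : b ^ 2 * k ≤ b ^ 2 * k * ρ := le_mul_of_one_le_right (by positivity) hρ1
    linarith [hB2ρ]
  have hC2 : c ^ 2 * k ≤ c₀ ^ 2 := by
    have h1 := mul_le4 (mul_nonneg hc0.le hk0.le) hc (mul_nonneg hc0.le hk0.le) hc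
    have h2 : c ^ 2 * k ≤ c ^ 2 * k * k := le_mul_of_one_le_right (by positivity) hk
    linarith
  have hbkρ : b * (k * ρ) ≤ c₀ * s := by
    have e : b * (k * ρ) = b * s * s := by rw [← hs2]; ring
    rw [e]; exact mul_le_mul_of_nonneg_right hb hs0.le
  have hbk : b * k ≤ c₀ := by
    have := mul_le_mul_of_nonneg_left hks hb0.le
    linarith
  fin_cases i <;> fin_cases j <;> simp [← hsdef]
  -- (0,0)
  · have t : a * ρ * (1 + b ^ 2 * k) ≤ c₀ * (1 + c₀ ^ 2) :=
      mul_le4 (by positivity) ha (by positivity) (by linarith)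
    linarith
  -- (0,1)
  · have hin : b ^ 2 * c ^ 2 * k ^ 2 ≤ c₀ ^ 2 * c₀ ^ 2 := by
      calc b ^ 2 * c ^ 2 * k ^ 2 = (b ^ 2 * k) * (c ^ 2 * k) := by ring
        _ ≤ c₀ ^ 2 * c₀ ^ 2 := mul_le4 (by positivity) hB2 (by positivity) hC2
    have t : b * s * (1 + b ^ 2 * k + b ^ 2 * c ^ 2 * k ^ 2)
        ≤ c₀ * (1 + c₀ ^ 2 + c₀ ^ 2 * c₀ ^ 2) :=
      mul_le4 (by positivity) hb (by positivity) (by linarith)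
    linarith
  -- (0,2)
  · rw [← div_eq_mul_inv, le_div_iff₀ hs0]
    have e : c * b ^ 2 * s * k * (1 + c ^ 2 * k) * s
        = (c * k) * (b ^ 2 * (k * ρ)) * (1 + c ^ 2 * k) := by
      have e2 : c * b ^ 2 * s * k * (1 + c ^ 2 * k) * s
          = c * b ^ 2 * k * (1 + c ^ 2 * k) * s ^ 2 := by ring
      rw [e2, hs2]; ring
    rw [e]
    have t : (c * k) * (b ^ 2 * (k * ρ)) * (1 + c ^ 2 * k) ≤ c₀ * c₀ ^ 2 * (1 + c₀ ^ 2) :=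
      mul_le4 (by positivity) (mul_le4 (by positivity) hc (by positivity) hB2ρ)
        (by positivity) (by linarith)
    linarith
  -- (1,0)
  · rw [mul_div_assoc', le_div_iff₀ hρ0]
    have t : a * ρ * (a ^ 2 * ρ + 1) ≤ c₀ * (c₀ ^ 2 + 1) :=
      mul_le4 (by positivity) ha (by positivity) (by linarith)
    linarith [mul_le_mul_of_nonneg_right t hs0.le,
      mul_le_mul_of_nonneg_right hP4 hs0.le]
  -- (1,1)
  · have t : b * k * (a ^ 2 * ρ + 1 + c ^ 2 * k) ≤ c₀ * (c₀ ^ 2 + 1 + c₀ ^ 2) :=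
      mul_le4 (by positivity) hbk (by positivity) (by linarith)
    linarith
  -- (1,2)
  · have t : c * k * (1 + c ^ 2 * k) ≤ c₀ * (1 + c₀ ^ 2) :=
      mul_le4 (by positivity) hc (by positivity) (by linarith)
    linarith
  -- (2,0)
  · rw [div_div, mul_div_assoc', le_div_iff₀ (by positivity : (0:ℝ) < ρ * ρ)]
    have e : a * b ^ 2 * k * s * (a ^ 2 * ρ + 1) * (ρ * ρ)
        = ((a * ρ) * (b ^ 2 * (k * ρ)) * (a ^ 2 * ρ + 1)) * s := by ring
    rw [e]
    have t : (a * ρ) * (b ^ 2 * (k * ρ)) * (a ^ 2 * ρ + 1) ≤ c₀ * c₀ ^ 2 * (c₀ ^ 2 + 1) :=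
      mul_le4 (by positivity) (mul_le4 (by positivity) ha (by positivity) hB2ρ)
        (by positivity) (by linarith)
    linarith [mul_le_mul_of_nonneg_right t hs0.le,
      mul_le_mul_of_nonneg_right hP6 hs0.le]
  -- (2,1)
  · rw [mul_div_assoc', le_div_iff₀ hρ0]
    have e : b * k * (a ^ 2 * b ^ 2 * k * ρ + b ^ 2 * k + 1) * ρ
        = (b * (k * ρ)) * (a ^ 2 * b ^ 2 * k * ρ + b ^ 2 * k + 1) := by ring
    rw [e]
    have hin : a ^ 2 * b ^ 2 * k * ρ ≤ c₀ ^ 2 * c₀ ^ 2 := by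
      calc a ^ 2 * b ^ 2 * k * ρ = (a ^ 2 * ρ) * (b ^ 2 * k) := by ring
        _ ≤ c₀ ^ 2 * c₀ ^ 2 := mul_le4 (by positivity) hA2 (by positivity) hB2
    have t : (b * (k * ρ)) * (a ^ 2 * b ^ 2 * k * ρ + b ^ 2 * k + 1)
        ≤ (c₀ * s) * (c₀ ^ 2 * c₀ ^ 2 + c₀ ^ 2 + 1) :=
      mul_le4 (by positivity) hbkρ (by positivity) (by linarith)
    linarith [t, mul_le_mul_of_nonneg_right hP7 hs0.le]
  -- (2,2)
  · have t : c * k * (b ^ 2 * k + 1) ≤ c₀ * (c₀ ^ 2 + 1) :=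
      mul_le4 (by positivity) hc (by positivity) (by linarith)
    linarith
  -- (3,3)
  · linarith
end

section
/- For every integer p ≥ 1 and every c₀ > 0 there exists C > 0 such that the following holds: for all real numbers k ≥ 1, ρ ≥ k and h_K, h_V, h_I, h_P > 0 satisfying (h_K k)^p √(kρ) + (h_V k)^p k + (h_I k)^p k + (h_P k)^p ≤ c₀, one has, componentwise, ℳ_Ω ≤ C·(√(ρ/k), 1, 1, 1)ᵀ. (The ℳ_Ω bound from the paper's Corollary on the threshold for k-uniform quasi-optimality away from trapping, Corollary 1.9.) -/
private lemma mul5_aux {M u1 u2 u3 u4 u5 : ℝ} (hM : 1 ≤ M)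
    (h1 : 0 ≤ u1) (h1' : u1 ≤ M) (h2 : 0 ≤ u2) (h2' : u2 ≤ M)
    (h3 : 0 ≤ u3) (h3' : u3 ≤ M) (h4 : 0 ≤ u4) (h4' : u4 ≤ M)
    (h5 : 0 ≤ u5) (h5' : u5 ≤ M) : u1 * u2 * u3 * u4 * u5 ≤ M ^ 5 := by
  have hM0 : (0:ℝ) ≤ M := le_trans zero_le_one hM
  calc u1 * u2 * u3 * u4 * u5
      ≤ M * M * M * M * M := by
        apply mul_le_mul _ h5' h5 (by
          exact mul_nonneg (mul_nonneg (mul_nonneg hM0 hM0) hM0) hM0)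
        apply mul_le_mul _ h4' h4 (mul_nonneg (mul_nonneg hM0 hM0) hM0)
        apply mul_le_mul _ h3' h3 (mul_nonneg hM0 hM0)
        exact mul_le_mul h1' h2' h2 hM0
    _ = M ^ 5 := by ring

set_option maxHeartbeats 1000000 in
/-- Corollary 1.9 (ℳ_Ω bound: threshold for k-uniform quasi-optimality away from trapping). -/
theorem quasioptimality_away_threshold_bound (p : ℕ) (hp : 1 ≤ p) (c₀ : ℝ) (hc₀ : 0 < c₀) :
    ∃ C : ℝ, 0 < C ∧
      ∀ k ρ hK hV hI hP : ℝ, 1 ≤ k → k ≤ ρ →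
        0 < hK → 0 < hV → 0 < hI → 0 < hP →
        (hK * k) ^ p * Real.sqrt (k * ρ) + (hV * k) ^ p * k + (hI * k) ^ p * k
            + (hP * k) ^ p ≤ c₀ →
        ∀ i : Fin 4, calMOmega p k ρ hK hV hI hP i ≤
          C * ![Real.sqrt (ρ / k), 1, 1, 1] i := by
  refine ⟨8 * (max 1 c₀) ^ 5, by positivity, ?_⟩
  intro k ρ hK hV hI hP hk1 hkρ hhK hhV hhI hhP hsum i
  have hk0 : (0:ℝ) < k := lt_of_lt_of_le one_pos hk1
  have hρ0 : (0:ℝ) < ρ := lt_of_lt_of_le hk0 hkρ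
  set s := Real.sqrt (ρ / k) with hs_def
  have hs0 : (0:ℝ) ≤ s := Real.sqrt_nonneg _
  have hs2 : s ^ 2 = ρ / k := Real.sq_sqrt (by positivity)
  have hs1 : 1 ≤ s := by
    have : (1:ℝ) ≤ ρ / k := (one_le_div hk0).2 hkρ
    nlinarith
  have hρs : ρ = k * s ^ 2 := by rw [hs2]; field_simp
  have hq : Real.sqrt (k * ρ) = k * s := by
    rw [show k * ρ = k ^ 2 * (ρ / k) by field_simp,
      Real.sqrt_mul (by positivity), Real.sqrt_sq hk0.le, hs_def]
  have hX0 : 0 ≤ (hK * k) ^ p := by positivity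
  have hY0 : 0 ≤ (hV * k) ^ p := by positivity
  have hZ0 : 0 ≤ (hI * k) ^ p := by positivity
  have hW0 : 0 ≤ (hP * k) ^ p := by positivity
  set M := max 1 c₀ with hM_def
  have hM1 : (1:ℝ) ≤ M := le_max_left _ _
  rw [hq] at hsum
  have hkY : 0 ≤ (hV * k) ^ p * k := by positivity
  have hkZ : 0 ≤ (hI * k) ^ p * k := by positivity
  have hqX : 0 ≤ (hK * k) ^ p * (k * s) := by positivity
  have hcM : c₀ ≤ M := le_max_right _ _
  have ha : (hK * k) ^ p * (k * s) ≤ M := by linarith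
  have hb : (hV * k) ^ p * k ≤ M := by linarith
  have hc : (hI * k) ^ p * k ≤ M := by linarith
  have hd : (hP * k) ^ p ≤ M := by linarith
  have hXs0 : 0 ≤ (hK * k) ^ p * s := mul_nonneg hX0 hs0
  have hXs : (hK * k) ^ p * s ≤ M := by
    nlinarith [mul_nonneg (mul_nonneg hX0 hs0) (sub_nonneg.2 hk1)]
  have hks1 : (1:ℝ) ≤ k * s := one_le_mul_of_one_le_of_one_le hk1 hs1
  have hXM : (hK * k) ^ p ≤ M := by nlinarith [mul_nonneg hX0 (sub_nonneg.2 hks1)]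
  have hYM : (hV * k) ^ p ≤ M := by nlinarith [mul_nonneg hY0 (sub_nonneg.2 hk1)]
  have hZM : (hI * k) ^ p ≤ M := by nlinarith [mul_nonneg hZ0 (sub_nonneg.2 hk1)]
  have o : (0:ℝ) ≤ 1 := zero_le_one
  have hM5 : (1:ℝ) ≤ M ^ 5 := one_le_pow₀ hM1
  have hMM5 : M ≤ M ^ 5 := le_self_pow₀ hM1 (by norm_num)
  have hM5s : (1:ℝ) ≤ M ^ 5 * s :=
    one_le_mul_of_one_le_of_one_le hM5 hs1
  fin_cases i
  · simp [calMOmega, calM, calT, calC, calHk, Matrix.mulVec, Matrix.mul_apply, Fin.sum_univ_four,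
      Matrix.one_apply, dotProduct, Matrix.diagonal_apply, Matrix.vecHead, Matrix.vecTail,
      Matrix.vecMul_diagonal, two_mul, pow_add, hq]
    rw [hρs]
    linarith [hM5s,
      mul_le_mul_of_nonneg_right (mul5_aux hM1 hqX ha o hM1 o hM1 o hM1 o hM1) hs0,
      mul_le_mul_of_nonneg_right (mul5_aux hM1 hqX ha hkY hb hY0 hYM o hM1 o hM1) hs0,
      mul_le_mul_of_nonneg_right (mul5_aux hM1 hkY hb o hM1 o hM1 o hM1 o hM1) hs0,
      mul_le_mul_of_nonneg_right (mul5_aux hM1 hkY hb hkY hb hY0 hYM o hM1 o hM1) hs0,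
      mul_le_mul_of_nonneg_right (mul5_aux hM1 hkY hb hkY hb hkY hb hZ0 hZM hZ0 hZM) hs0,
      mul_le_mul_of_nonneg_right (mul5_aux hM1 hkY hb hkY hb hZ0 hZM o hM1 o hM1) hs0,
      mul_le_mul_of_nonneg_right (mul5_aux hM1 hkY hb hkY hb hkZ hc hZ0 hZM hZ0 hZM) hs0]
  · simp [calMOmega, calM, calT, calC, calHk, Matrix.mulVec, Matrix.mul_apply, Fin.sum_univ_four,
      Matrix.one_apply, dotProduct, Matrix.diagonal_apply, Matrix.vecHead, Matrix.vecTail,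
      Matrix.vecMul_diagonal, two_mul, pow_add, hq]
    rw [hρs]
    linarith [hM5,
      mul5_aux hM1 hqX ha hqX ha hXs0 hXs o hM1 o hM1,
      mul5_aux hM1 hqX ha o hM1 o hM1 o hM1 o hM1,
      mul5_aux hM1 hqX ha hqX ha hY0 hYM o hM1 o hM1,
      mul5_aux hM1 hkY hb o hM1 o hM1 o hM1 o hM1,
      mul5_aux hM1 hkY hb hkZ hc hZ0 hZM o hM1 o hM1,
      mul5_aux hM1 hkZ hc o hM1 o hM1 o hM1 o hM1,
      mul5_aux hM1 hkZ hc hkZ hc hZ0 hZM o hM1 o hM1]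
  · simp [calMOmega, calM, calT, calC, calHk, Matrix.mulVec, Matrix.mul_apply, Fin.sum_univ_four,
      Matrix.one_apply, dotProduct, Matrix.diagonal_apply, Matrix.vecHead, Matrix.vecTail,
      Matrix.vecMul_diagonal, two_mul, pow_add, hq]
    rw [hρs]
    linarith [hM5,
      mul5_aux hM1 hqX ha hqX ha hqX ha hY0 hYM hY0 hYM,
      mul5_aux hM1 hqX ha hkY hb hY0 hYM o hM1 o hM1,
      mul5_aux hM1 hqX ha hqX ha hkY hb hY0 hYM hY0 hYM,
      mul5_aux hM1 hkY hb hkY hb hY0 hYM o hM1 o hM1,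
      mul5_aux hM1 hkY hb o hM1 o hM1 o hM1 o hM1,
      mul5_aux hM1 hkY hb hkY hb hZ0 hZM o hM1 o hM1,
      mul5_aux hM1 hkZ hc o hM1 o hM1 o hM1 o hM1]
  · simp [calMOmega, calM, calT, calC, calHk, Matrix.mulVec, Matrix.mul_apply, Fin.sum_univ_four,
      Matrix.one_apply, dotProduct, Matrix.diagonal_apply, Matrix.vecHead, Matrix.vecTail,
      Matrix.vecMul_diagonal, two_mul, pow_add, hq]
    linarith [hM5, hMM5, hd]
end

section
/- Let W be an N×N matrix with nonnegative real entries, and suppose that the family of weights of simple loops is summable with c := Σ_{L ∈ 𝕊𝕃} W_L < 1. Then the series Σ_{n=0}^∞ Wⁿ converges entrywise, and componentwise T⋆ ≤ Σ_{n=0}^∞ Wⁿ ≤ (1−c)^{-1} T⋆, where T⋆ is the simple-path matrix of W. (Paper's Theorem on the bound on (I−W)^{-1} by the simple-path matrix.) -/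
variable {N : ℕ}

/-- The list of nodes visited by a list of edges `(i₁,j₁)⋯(i_L,j_L)`,
namely `[i₁, j₁, j₂, …, j_L]` (which equals `[i₁, …, i_L, j_L]` for a path). -/
def edgeNodes : List (Fin N × Fin N) → List (Fin N)
  | [] => []
  | e :: rest => e.1 :: ((e :: rest).map Prod.snd)

/-- An edge list is a path when consecutive edges are compatible: `jₗ = i_{ℓ+1}`. -/
def IsPathList (l : List (Fin N × Fin N)) : Prop :=
  l.Chain' fun e f => e.2 = f.1

/-- `l` is a path from `i` to `j`; the empty path `𝟎` is a path from `i` to `i` for every `i`. -/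
def PathFromTo (l : List (Fin N × Fin N)) (i j : Fin N) : Prop :=
  IsPathList l ∧
    ((l = [] ∧ i = j) ∨ ((edgeNodes l).head? = some i ∧ (edgeNodes l).getLast? = some j))

/-- A path is non-intersecting when the visited nodes are pairwise distinct. -/
def NonIntersecting (l : List (Fin N × Fin N)) : Prop :=
  (edgeNodes l).Nodup

/-- A loop: a nonempty path with `p(1) = p(|p|+1)`. -/
def IsLoop (l : List (Fin N × Fin N)) : Prop :=
  IsPathList l ∧ l ≠ [] ∧ (edgeNodes l).head? = (edgeNodes l).getLast?

/-- A simple loop: a loop whose only repeated visited node is the initial/terminal one. -/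
def IsSimpleLoop (l : List (Fin N × Fin N)) : Prop :=
  IsLoop l ∧ (edgeNodes l).dropLast.Nodup

/-- The weight `W_p` of a path: the product of the weights of its edges (`W_𝟎 = 1`). -/
def pathWeight (W : Matrix (Fin N) (Fin N) ℝ) (l : List (Fin N × Fin N)) : ℝ :=
  (l.map fun e => W e.1 e.2).prod

/-- The simple-path matrix `T⋆_{ij} = Σ_{p ∈ 𝕍_{ij}} W_p` (a sum over a finite set). -/
noncomputable def Tstar (W : Matrix (Fin N) (Fin N) ℝ) (i j : Fin N) : ℝ :=
  ∑' q : {l : List (Fin N × Fin N) // PathFromTo l i j ∧ NonIntersecting l}, pathWeight W q.1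

/-- The sum `c = Σ_{L ∈ 𝕊𝕃} W_L` of the weights of all simple loops. -/
noncomputable def slSum (W : Matrix (Fin N) (Fin N) ℝ) : ℝ :=
  ∑' L : {l : List (Fin N × Fin N) // IsSimpleLoop l}, pathWeight W L.1

lemma pathWeight_nonneg {W : Matrix (Fin N) (Fin N) ℝ} (hW : ∀ i j, 0 ≤ W i j)
    (l : List (Fin N × Fin N)) : 0 ≤ pathWeight W l := by
  apply List.prod_nonneg; intro x hx
  obtain ⟨e, -, rfl⟩ := List.mem_map.1 hx; exact hW _ _

lemma pathWeight_append (W : Matrix (Fin N) (Fin N) ℝ) (a b : List (Fin N × Fin N)) :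
    pathWeight W (a ++ b) = pathWeight W a * pathWeight W b := by
  simp [pathWeight]

lemma edgeNodes_head?_eq : ∀ (l : List (Fin N × Fin N)),
    (edgeNodes l).head? = l.head?.map Prod.fst
  | [] => rfl
  | e :: rest => rfl

lemma edgeNodes_getLast?_eq : ∀ (l : List (Fin N × Fin N)),
    (edgeNodes l).getLast? = l.getLast?.map Prod.snd
  | [] => rfl
  | e :: rest => by
      show (e.1 :: (e :: rest).map Prod.snd).getLast? = _
      rw [List.map_cons, List.getLast?_cons_cons, ← List.map_cons, List.getLast?_map]

lemma pathFromTo_iff {l : List (Fin N × Fin N)} {i j : Fin N} :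
    PathFromTo l i j ↔ IsPathList l ∧
      ((l = [] ∧ i = j) ∨ (l.head?.map Prod.fst = some i ∧ l.getLast?.map Prod.snd = some j)) := by
  unfold PathFromTo
  rw [edgeNodes_head?_eq, edgeNodes_getLast?_eq]

lemma edgeNodes_eq {l : List (Fin N × Fin N)} (hl : IsPathList l) {z : Fin N × Fin N}
    (hz : l.getLast? = some z) : edgeNodes l = l.map Prod.fst ++ [z.2] := by
  induction l with
  | nil => simp at hz
  | cons e rest ih =>
    cases rest with
    | nil => simp at hz; subst hz; simp [edgeNodes]
    | cons f rest' =>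
      obtain ⟨h1, h2⟩ := List.isChain_cons_cons.1 hl
      have hz' : (f :: rest').getLast? = some z := by rwa [List.getLast?_cons_cons] at hz
      have := ih h2 hz'
      have hEN : edgeNodes (f :: rest') = f.1 :: (f :: rest').map Prod.snd := rfl
      show e.1 :: (e :: f :: rest').map Prod.snd = _
      rw [List.map_cons (f := Prod.snd), List.map_cons (f := Prod.fst)]
      rw [hEN] at this
      rw [h1, this]
      simp

lemma pathFromTo_cons {e : Fin N × Fin N} {l : List (Fin N × Fin N)} {i j : Fin N} :
    PathFromTo (e :: l) i j ↔ e.1 = i ∧ PathFromTo l e.2 j := by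
  rw [pathFromTo_iff, pathFromTo_iff]
  cases l with
  | nil => simp [IsPathList, List.Chain']
  | cons f t =>
    rw [IsPathList, List.Chain', List.isChain_cons_cons, List.getLast?_cons_cons]
    simp only [List.head?_cons, Option.map_some, Option.some_inj, List.cons_ne_nil,
      false_and, false_or, reduceCtorEq]
    constructor
    · rintro ⟨⟨hef, hch⟩, hi, hj⟩; exact ⟨hi, hch, hef.symm, hj⟩
    · rintro ⟨hi, hch, hf, hj⟩; exact ⟨⟨hf.symm, hch⟩, hi, hj⟩

open Finset in
def listsLen (N : ℕ) : ℕ → Finset (List (Fin N × Fin N))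
  | 0 => {[]}
  | n+1 => Finset.univ.biUnion fun e : Fin N × Fin N => (listsLen N n).image (e :: ·)

lemma mem_listsLen {n : ℕ} {l : List (Fin N × Fin N)} :
    l ∈ listsLen N n ↔ l.length = n := by
  induction n generalizing l with
  | zero => simp [listsLen, List.length_eq_zero_iff]
  | succ n ih =>
    simp only [listsLen, Finset.mem_biUnion, Finset.mem_univ, Finset.mem_image, true_and]
    constructor
    · rintro ⟨e, l', hl', rfl⟩; simp [ih.1 hl']
    · intro hl
      cases l with
      | nil => simp at hl
      | cons e l' => exact ⟨e, l', ih.2 (by simpa using hl), rfl⟩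

open Classical in
noncomputable def pathsLen (N : ℕ) (n : ℕ) (i j : Fin N) : Finset (List (Fin N × Fin N)) :=
  (listsLen N n).filter (fun l => PathFromTo l i j)

open Classical in
lemma mem_pathsLen {n : ℕ} {i j : Fin N} {l : List (Fin N × Fin N)} :
    l ∈ pathsLen N n i j ↔ l.length = n ∧ PathFromTo l i j := by
  rw [pathsLen, Finset.mem_filter, mem_listsLen]

lemma pathsLen_succ (n : ℕ) (i j : Fin N) :
    pathsLen N (n+1) i j =
      Finset.univ.biUnion (fun k : Fin N => (pathsLen N n k j).image (fun l => (i,k) :: l)) := by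
  ext l
  simp only [mem_pathsLen, Finset.mem_biUnion, Finset.mem_univ, Finset.mem_image, true_and]
  constructor
  · rintro ⟨hlen, hp⟩
    cases l with
    | nil => simp at hlen
    | cons e l' =>
      obtain ⟨he, hp'⟩ := pathFromTo_cons.1 hp
      refine ⟨e.2, l', ⟨by simpa using hlen, hp'⟩, ?_⟩
      rw [← he]
  · rintro ⟨k, l', hl', rfl⟩
    obtain ⟨hlen, hp⟩ := hl'
    exact ⟨by simp [hlen], pathFromTo_cons.2 ⟨rfl, hp⟩⟩

lemma pow_apply_eq (W : Matrix (Fin N) (Fin N) ℝ) :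
    ∀ (n : ℕ) (i j : Fin N), (W ^ n) i j = ∑ l ∈ pathsLen N n i j, pathWeight W l := by
  intro n
  induction n with
  | zero =>
    intro i j
    by_cases h : i = j
    · subst h
      have : pathsLen N 0 i i = {[]} := by
        ext l
        simp only [mem_pathsLen, Finset.mem_singleton, List.length_eq_zero_iff]
        constructor
        · rintro ⟨rfl, -⟩; rfl
        · rintro rfl; exact ⟨rfl, ⟨List.isChain_nil, Or.inl ⟨rfl, rfl⟩⟩⟩
      simp [this, Matrix.one_apply, pathWeight]
    · have : pathsLen N 0 i j = ∅ := by
        ext l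
        simp only [mem_pathsLen, Finset.notMem_empty, iff_false, not_and, List.length_eq_zero_iff]
        rintro rfl hp
        rcases hp.2 with ⟨-, hij⟩ | ⟨hh, -⟩
        · exact h hij
        · simp [edgeNodes] at hh
      simp [this, Matrix.one_apply, h]
  | succ n ih =>
    intro i j
    rw [pow_succ', Matrix.mul_apply, pathsLen_succ]
    rw [Finset.sum_biUnion]
    · refine Finset.sum_congr rfl fun k _ => ?_
      have hinj : ∀ x ∈ pathsLen N n k j, ∀ y ∈ pathsLen N n k j,
          (i,k) :: x = (i,k) :: y → x = y := by
        intro x _ y _ h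
        simpa using h
      rw [Finset.sum_image hinj]
      rw [ih k j, Finset.mul_sum]
      refine Finset.sum_congr rfl fun l _ => ?_
      simp [pathWeight]
    · intro k _ k' _ hkk'
      simp only [Function.onFun]
      rw [Finset.disjoint_left]
      rintro l hl hl'
      simp only [Finset.mem_image] at hl hl'
      obtain ⟨x, -, hx⟩ := hl
      obtain ⟨y, -, hy⟩ := hl'
      rw [← hy] at hx
      simp only [List.cons.injEq, Prod.mk.injEq] at hx
      exact hkk' hx.1.2

noncomputable def pathsUpTo (N M : ℕ) (i j : Fin N) : Finset (List (Fin N × Fin N)) :=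
  (Finset.range (M+1)).biUnion fun n => pathsLen N n i j

lemma mem_pathsUpTo {M : ℕ} {i j : Fin N} {l : List (Fin N × Fin N)} :
    l ∈ pathsUpTo N M i j ↔ l.length ≤ M ∧ PathFromTo l i j := by
  simp only [pathsUpTo, Finset.mem_biUnion, Finset.mem_range, mem_pathsLen]
  constructor
  · rintro ⟨n, hn, rfl, hp⟩; exact ⟨by omega, hp⟩
  · rintro ⟨hlen, hp⟩; exact ⟨l.length, by omega, rfl, hp⟩

lemma sum_range_pow_apply (W : Matrix (Fin N) (Fin N) ℝ) (M : ℕ) (i j : Fin N) :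
    ∑ n ∈ Finset.range (M+1), (W ^ n) i j = ∑ l ∈ pathsUpTo N M i j, pathWeight W l := by
  rw [pathsUpTo, Finset.sum_biUnion]
  · exact Finset.sum_congr rfl fun n _ => pow_apply_eq W n i j
  · intro n _ n' _ hnn'
    simp only [Function.onFun]
    rw [Finset.disjoint_left]
    intro l hl hl'
    exact hnn' ((mem_pathsLen.1 hl).1 ▸ (mem_pathsLen.1 hl').1 ▸ rfl)
lemma exists_dup_split {α : Type*} [DecidableEq α] :
    ∀ {xs : List α}, ¬ xs.Nodup → ∃ (a : List α) (v : α) (b c : List α),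
      xs = a ++ v :: (b ++ v :: c) ∧ (a ++ v :: b).Nodup := by
  intro xs
  induction xs with
  | nil => intro h; exact absurd List.nodup_nil h
  | cons x t ih =>
    intro h
    by_cases ht : t.Nodup
    · have hx : x ∈ t := by
        by_contra hx; exact h (List.nodup_cons.2 ⟨hx, ht⟩)
      obtain ⟨b, c, rfl⟩ := List.append_of_mem hx
      rw [List.nodup_append] at ht
      refine ⟨[], x, b, c, by simp, ?_⟩
      simp only [List.nil_append, List.nodup_cons]
      exact ⟨fun hxb => ht.2.2 x hxb x List.mem_cons_self rfl, ht.1⟩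
    · obtain ⟨a, v, b, c, hsp, hnd⟩ := ih ht
      by_cases hx : x ∈ a ++ v :: b
      · obtain ⟨b₁, b₂, hsplit⟩ := List.append_of_mem hx
        have h1 : b₁.Nodup ∧ x ∉ b₁ := by
          rw [hsplit, List.nodup_append] at hnd
          exact ⟨hnd.1, fun h' => hnd.2.2 x h' x List.mem_cons_self rfl⟩
        refine ⟨[], x, b₁, b₂ ++ v :: c, ?_, ?_⟩
        · have ht2 : t = (a ++ v :: b) ++ v :: c := by rw [hsp]; simp
          rw [ht2, hsplit]
          simp
        · simp only [List.nil_append, List.nodup_cons]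
          exact ⟨h1.2, h1.1⟩
      · refine ⟨x :: a, v, b, c, by rw [hsp]; simp, ?_⟩
        rw [List.cons_append, List.nodup_cons]
        exact ⟨by simpa using hx, hnd⟩

def LoopBase (l : List (Fin N × Fin N)) (v : Fin N) : Prop :=
  l.head?.map Prod.fst = some v ∧ l.getLast?.map Prod.snd = some v

lemma simpleLoop_length_le {l : List (Fin N × Fin N)} (h : IsSimpleLoop l) :
    l.length ≤ N := by
  obtain ⟨⟨hch, hne, -⟩, hnd⟩ := h
  obtain ⟨z, hz⟩ : ∃ z, l.getLast? = some z := ⟨_, List.getLast?_eq_getLast hne⟩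
  rw [edgeNodes_eq hch hz, List.dropLast_concat] at hnd
  have := hnd.length_le_card
  simpa using this

lemma nonIntersecting_length_le {l : List (Fin N × Fin N)} {i j : Fin N}
    (hp : PathFromTo l i j) (h : NonIntersecting l) : l.length ≤ N := by
  cases l with
  | nil => simp
  | cons e t =>
    have hne : (e :: t) ≠ [] := by simp
    obtain ⟨z, hz⟩ : ∃ z, (e :: t).getLast? = some z := ⟨_, List.getLast?_eq_getLast hne⟩
    rw [NonIntersecting, edgeNodes_eq hp.1 hz] at h
    have := h.length_le_card
    simp only [List.length_append, List.length_map, Fintype.card_fin, List.length_cons,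
      List.length_singleton] at this ⊢
    omega

lemma loopBase_of_simple {l : List (Fin N × Fin N)} (h : IsSimpleLoop l) :
    ∃ v, LoopBase l v := by
  obtain ⟨⟨hch, hne, heq⟩, -⟩ := h
  rw [edgeNodes_head?_eq, edgeNodes_getLast?_eq] at heq
  obtain ⟨e, t, rfl⟩ := List.exists_cons_of_ne_nil hne
  exact ⟨e.1, by simp, by rw [← heq]; simp⟩
lemma exists_decomp {l : List (Fin N × Fin N)} {i j : Fin N}
    (hl : PathFromTo l i j) (hnd : ¬ NonIntersecting l) :
    ∃ a loop cc v, l = a ++ loop ++ cc ∧ IsSimpleLoop loop ∧ LoopBase loop v ∧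
      v ∉ a.map Prod.fst ∧ PathFromTo (a ++ cc) i j := by
  obtain ⟨hch, hep⟩ := hl
  have hne : l ≠ [] := by rintro rfl; exact hnd (by simp [NonIntersecting, edgeNodes])
  obtain ⟨z, hz⟩ : ∃ z, l.getLast? = some z := ⟨_, List.getLast?_eq_getLast hne⟩
  have hxs : edgeNodes l = l.map Prod.fst ++ [z.2] := edgeNodes_eq hch hz
  obtain ⟨a', v, b', c', hsplit, hnd'⟩ := exists_dup_split hnd
  set s := a'.length with hs
  set m := b'.length + 1 with hm
  have hLL : l.length + 1 = s + m + c'.length + 1 := by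
    have h1 := congrArg List.length hsplit
    rw [hxs] at h1
    simp at h1
    omega
  have hsm : s + m ≤ l.length := by omega
  set F := l.map Prod.fst with hF
  have hFlen : F.length = l.length := by rw [hF]; simp
  have hxs2 : edgeNodes l = (a' ++ v :: b') ++ v :: c' := by rw [hsplit]; simp
  have hlen2 : (a' ++ v :: b').length = s + m := by simp [hm, hs]
  have htake_sm : (edgeNodes l).take (s + m) = a' ++ v :: b' := by
    rw [hxs2]; exact List.take_left' hlen2
  have htake_s : (edgeNodes l).take s = a' := by
    rw [hsplit]; exact List.take_left' rfl
  have hFtake : ∀ k, k ≤ l.length → F.take k = (edgeNodes l).take k := by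
    intro k hk
    rw [hxs, List.take_append]
    have h0 : k - F.length = 0 := by omega
    rw [h0]
    simp
  set a := l.take s with ha
  set loop := (l.drop s).take m with hloop
  set cc := l.drop (s + m) with hcc
  have hdecomp : l = a ++ loop ++ cc := by
    rw [List.append_assoc]
    have h2 : loop ++ cc = l.drop s := by
      rw [hloop, hcc]
      have h3 : l.drop (s+m) = (l.drop s).drop m := by rw [List.drop_drop]
      rw [h3, List.take_append_drop]
    rw [h2, ha, List.take_append_drop]
  have hamap : a.map Prod.fst = a' := by
    rw [ha, List.map_take, ← hF, hFtake s (by omega), htake_s]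
  have hloopmap : loop.map Prod.fst = v :: b' := by
    rw [hloop, List.map_take, List.map_drop, ← hF]
    have h3 : (F.drop s).take m = (F.take (s+m)).drop s := by
      rw [List.drop_take]
      congr 1
      omega
    rw [h3, hFtake (s+m) hsm, htake_sm]
    exact List.drop_left' rfl
  have hccmap : cc.map Prod.fst ++ [z.2] = v :: c' := by
    have h4 : (edgeNodes l).drop (s + m) = v :: c' := by
      rw [hxs2]; exact List.drop_left' hlen2
    rw [← h4, hxs, List.drop_append]
    have h0 : s + m - F.length = 0 := by omega
    rw [h0, hcc, List.map_drop, ← hF]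
    simp
  have hch2 : List.Chain' (fun e f => e.2 = f.1) (a ++ (loop ++ cc)) := by
    rw [← List.append_assoc, ← hdecomp]; exact hch
  obtain ⟨hcha, hchlc, hj1⟩ := List.isChain_append.1 hch2
  obtain ⟨hchloop, hchcc, hj2⟩ := List.isChain_append.1 hchlc
  have hlooplen : loop.length = m := by
    rw [hloop, List.length_take, List.length_drop]
    omega
  have hloopne : loop ≠ [] := by
    intro h0
    rw [h0] at hlooplen
    simp [hm] at hlooplen
  obtain ⟨e₀, t₀, hE⟩ := List.exists_cons_of_ne_nil hloopne
  have he₀ : e₀.1 = v := by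
    rw [hE] at hloopmap
    simpa using congrArg List.head? hloopmap
  obtain ⟨y, hy⟩ : ∃ y, loop.getLast? = some y := ⟨_, List.getLast?_eq_getLast hloopne⟩
  have hloophead : loop.head? = some e₀ := by rw [hE]; rfl
  have hlchead : (loop ++ cc).head? = some e₀ := by
    rw [List.head?_append, hloophead]; rfl
  have hcchead : ∀ f ∈ cc.head?, f.1 = v := by
    intro f hf
    obtain ⟨g, t, hcceq⟩ := List.exists_cons_of_ne_nil (l := cc) (by rintro h0; rw [h0] at hf; simp at hf)
    rw [hcceq] at hf hccmap
    simp only [List.head?_cons, Option.mem_def, Option.some_inj] at hf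
    subst hf
    simpa using congrArg List.head? hccmap
  have hccnil : cc = [] → z.2 = v := by
    intro h0
    rw [h0] at hccmap
    simpa using congrArg List.head? hccmap
  have hlastl : ∀ hccne : cc ≠ [], l.getLast? = cc.getLast? := by
    intro hccne
    obtain ⟨w, hw⟩ : ∃ w, cc.getLast? = some w := ⟨_, List.getLast?_eq_getLast hccne⟩
    rw [hdecomp, List.getLast?_append, hw]
    rfl
  have hyv : y.2 = v := by
    cases hc : cc with
    | nil =>
      have h5 : l.getLast? = loop.getLast? := by
        rw [hdecomp, hc, List.append_nil, List.getLast?_append, hy]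
        rfl
      have hyz : y = z := by
        rw [hz, hy] at h5
        exact (Option.some_inj.1 h5).symm
      rw [hyz]
      exact hccnil hc
    | cons g t =>
      have h5 := hj2 y hy g (by rw [hc]; rfl)
      rw [h5]
      exact hcchead g (by rw [hc]; rfl)
  have hEN : edgeNodes loop = loop.map Prod.fst ++ [y.2] := edgeNodes_eq hchloop hy
  have hSL : IsSimpleLoop loop := by
    refine ⟨⟨hchloop, hloopne, ?_⟩, ?_⟩
    · rw [edgeNodes_head?_eq, edgeNodes_getLast?_eq, hloophead, hy]
      simp [he₀, hyv]
    · rw [hEN, List.dropLast_concat, hloopmap]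
      exact (List.nodup_append.1 hnd').2.1
  have hLB : LoopBase loop v := by
    refine ⟨?_, ?_⟩
    · rw [hloophead]; simp [he₀]
    · rw [hy]; simp [hyv]
  have hva : v ∉ a.map Prod.fst := by
    rw [hamap]
    intro hv
    exact (List.nodup_append.1 hnd').2.2 v hv v List.mem_cons_self rfl
  have halast : ∀ x ∈ a.getLast?, x.2 = v := by
    intro x hx
    have := hj1 x hx e₀ hlchead
    rw [this, he₀]
  have hchac : IsPathList (a ++ cc) := by
    rw [IsPathList, List.Chain', List.isChain_append]
    refine ⟨hcha, hchcc, ?_⟩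
    intro x hx f hf
    rw [halast x hx]
    exact (hcchead f hf).symm
  have hep' : l.head?.map Prod.fst = some i ∧ l.getLast?.map Prod.snd = some j := by
    rcases hep with ⟨h0, -⟩ | h0
    · exact absurd h0 hne
    · rwa [edgeNodes_head?_eq, edgeNodes_getLast?_eq] at h0
  have hzj : z.2 = j := by
    have h6 := hep'.2
    rw [hz] at h6
    simpa using h6
  refine ⟨a, loop, cc, v, hdecomp, hSL, hLB, hva, ?_⟩
  rw [pathFromTo_iff]
  refine ⟨hchac, ?_⟩
  by_cases hac : a = []
  · have hiv : i = v := by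
      have h7 : l.head? = some e₀ := by
        rw [hdecomp, hac, List.nil_append, hlchead]
      have h8 := hep'.1
      rw [h7] at h8
      simp only [Option.map_some, Option.some_inj] at h8
      rw [← h8, he₀]
    by_cases hccn : cc = []
    · left
      have hjv : j = v := by rw [← hzj]; exact hccnil hccn
      exact ⟨by rw [hac, hccn]; rfl, by rw [hiv, hjv]⟩
    · right
      obtain ⟨g, t, hcceq⟩ := List.exists_cons_of_ne_nil hccn
      constructor
      · rw [hac, List.nil_append, hcceq]
        simp only [List.head?_cons, Option.map_some, Option.some_inj]
        rw [hcchead g (by rw [hcceq]; rfl), hiv]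
      · rw [hac, List.nil_append, ← hlastl hccn, hz]
        simpa using hzj
  · right
    obtain ⟨g, t, haeq⟩ := List.exists_cons_of_ne_nil hac
    constructor
    · have h9 : (a ++ cc).head? = l.head? := by
        rw [hdecomp, List.append_assoc, haeq]
        rfl
      rw [h9]
      exact hep'.1
    · by_cases hccn : cc = []
      · obtain ⟨x, hx⟩ : ∃ x, a.getLast? = some x := ⟨_, List.getLast?_eq_getLast hac⟩
        rw [hccn, List.append_nil, hx]
        have hjv : j = v := by rw [← hzj]; exact hccnil hccn
        simp only [Option.map_some, Option.some_inj]
        rw [halast x hx, hjv]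
      · rw [List.getLast?_append, ← hlastl hccn, hz]
        show Option.map Prod.snd (some z) = some j
        simpa using hzj
lemma decomp_length_le {l₁ a₁ a₂ c₁ c₂ loop : List (Fin N × Fin N)} {v : Fin N}
    (hch : IsPathList l₁) (h₁ : l₁ = a₁ ++ loop ++ c₁) (hq : a₁ ++ c₁ = a₂ ++ c₂)
    (hb : loop.getLast?.map Prod.snd = some v) (hv₂ : v ∉ a₂.map Prod.fst) :
    a₂.length ≤ a₁.length := by
  by_contra hlt
  push_neg at hlt
  have hlen : a₁.length + c₁.length = a₂.length + c₂.length := by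
    have := congrArg List.length hq; simpa using this
  have hc₁ : c₁ ≠ [] := by
    rintro rfl
    simp at hlen
    omega
  obtain ⟨ch, c₁', rfl⟩ := List.exists_cons_of_ne_nil hc₁
  have hloopne : loop ≠ [] := by rintro rfl; simp at hb
  obtain ⟨y, hy⟩ : ∃ y, loop.getLast? = some y := ⟨_, List.getLast?_eq_getLast hloopne⟩
  have hyv : y.2 = v := by rw [hy] at hb; simpa using hb
  have hchl : List.Chain' (fun e f => e.2 = f.1) ((a₁ ++ loop) ++ ch :: c₁') := by
    rw [← h₁]; exact hch
  obtain ⟨-, -, hj⟩ := List.isChain_append.1 hchl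
  have hgl : (a₁ ++ loop).getLast? = some y := by
    rw [List.getLast?_append, hy]; rfl
  have hch1 : ch.1 = v := by
    have := hj y hgl ch rfl
    rw [← this]
    exact hyv
  have hmem : ch ∈ a₂ := by
    have ha₂ : a₂ = (a₁ ++ ch :: c₁').take a₂.length := by
      rw [hq]
      exact List.take_left.symm
    rw [ha₂, List.take_append]
    apply List.mem_append.2
    right
    have hpos : a₂.length - a₁.length ≠ 0 := by omega
    obtain ⟨k, hk⟩ := Nat.exists_eq_succ_of_ne_zero hpos
    rw [hk, List.take_succ_cons]
    exact List.mem_cons_self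
  exact hv₂ (List.mem_map.2 ⟨ch, hmem, hch1⟩)

lemma decomp_inj {l₁ l₂ a₁ a₂ c₁ c₂ loop : List (Fin N × Fin N)} {v : Fin N}
    (hch₁ : IsPathList l₁) (hch₂ : IsPathList l₂)
    (h₁ : l₁ = a₁ ++ loop ++ c₁) (h₂ : l₂ = a₂ ++ loop ++ c₂)
    (hq : a₁ ++ c₁ = a₂ ++ c₂)
    (hb : loop.getLast?.map Prod.snd = some v)
    (hv₁ : v ∉ a₁.map Prod.fst) (hv₂ : v ∉ a₂.map Prod.fst) : l₁ = l₂ := by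
  have e1 := decomp_length_le hch₁ h₁ hq hb hv₂
  have e2 := decomp_length_le hch₂ h₂ hq.symm hb hv₁
  have hlen : a₁.length = a₂.length := le_antisymm e2 e1
  have ha : a₁ = a₂ := by
    have t1 : (a₁ ++ c₁).take a₁.length = a₁ := List.take_left
    have t2 : (a₂ ++ c₂).take a₂.length = a₂ := List.take_left
    rw [← t1, ← t2, hq, hlen]
  subst ha
  have hc : c₁ = c₂ := by
    have := hq
    rwa [List.append_cancel_left_eq] at this
  rw [h₁, h₂, hc]
open Classical in
noncomputable def Vfin (N : ℕ) (i j : Fin N) : Finset (List (Fin N × Fin N)) :=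
  (pathsUpTo N N i j).filter (fun l => NonIntersecting l)

open Classical in
noncomputable def SLfin (N : ℕ) : Finset (List (Fin N × Fin N)) :=
  ((Finset.range (N+1)).biUnion (listsLen N)).filter (fun l => IsSimpleLoop l)

open Classical in
lemma mem_Vfin {i j : Fin N} {l : List (Fin N × Fin N)} :
    l ∈ Vfin N i j ↔ PathFromTo l i j ∧ NonIntersecting l := by
  rw [Vfin, Finset.mem_filter, mem_pathsUpTo]
  constructor
  · rintro ⟨⟨-, hp⟩, hni⟩; exact ⟨hp, hni⟩
  · rintro ⟨hp, hni⟩; exact ⟨⟨nonIntersecting_length_le hp hni, hp⟩, hni⟩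

open Classical in
lemma mem_SLfin {l : List (Fin N × Fin N)} : l ∈ SLfin N ↔ IsSimpleLoop l := by
  rw [SLfin, Finset.mem_filter]
  simp only [Finset.mem_biUnion, Finset.mem_range, mem_listsLen]
  constructor
  · rintro ⟨-, h⟩; exact h
  · intro h; exact ⟨⟨l.length, by have := simpleLoop_length_le h; omega, rfl⟩, h⟩

lemma Tstar_eq (W : Matrix (Fin N) (Fin N) ℝ) (i j : Fin N) :
    Tstar W i j = ∑ l ∈ Vfin N i j, pathWeight W l := by
  calc Tstar W i j
      = ∑' (x : {x // x ∈ Vfin N i j}), pathWeight W x.1 :=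
        Equiv.tsum_eq (Equiv.subtypeEquivRight fun l => mem_Vfin.symm)
          (fun x : {x // x ∈ Vfin N i j} => pathWeight W x.1) |>.symm ▸ rfl
    _ = ∑ l ∈ Vfin N i j, pathWeight W l := Finset.tsum_subtype _ _

lemma slSum_eq (W : Matrix (Fin N) (Fin N) ℝ) :
    slSum W = ∑ l ∈ SLfin N, pathWeight W l := by
  calc slSum W
      = ∑' (x : {x // x ∈ SLfin N}), pathWeight W x.1 :=
        Equiv.tsum_eq (Equiv.subtypeEquivRight fun l => mem_SLfin.symm)
          (fun x : {x // x ∈ SLfin N} => pathWeight W x.1) |>.symm ▸ rfl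
    _ = ∑ l ∈ SLfin N, pathWeight W l := Finset.tsum_subtype _ _
open Classical in
lemma key_bound (W : Matrix (Fin N) (Fin N) ℝ) (hW : ∀ i j, 0 ≤ W i j) (M : ℕ) (i j : Fin N) :
    ∑ l ∈ pathsUpTo N M i j, pathWeight W l ≤
      Tstar W i j + (∑ l ∈ SLfin N, pathWeight W l) * ∑ l ∈ pathsUpTo N M i j, pathWeight W l := by
  set S := pathsUpTo N M i j with hS
  apply le_trans (le_of_eq
    (Finset.sum_filter_add_sum_filter_not S (fun l => NonIntersecting l) (pathWeight W)).symm)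
  apply add_le_add
  · rw [Tstar_eq]
    apply Finset.sum_le_sum_of_subset_of_nonneg
    · intro l hl
      rw [Finset.mem_filter, hS, mem_pathsUpTo] at hl
      exact mem_Vfin.2 ⟨hl.1.2, hl.2⟩
    · intro l _ _; exact pathWeight_nonneg hW l
  · set F := S.filter (fun l => ¬ NonIntersecting l) with hFdef
    have hdec : ∀ p : List (Fin N × Fin N),
        ∃ alc : List (Fin N × Fin N) × List (Fin N × Fin N) × List (Fin N × Fin N),
        PathFromTo p i j → ¬ NonIntersecting p →
          (p = alc.1 ++ alc.2.1 ++ alc.2.2 ∧ IsSimpleLoop alc.2.1 ∧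
           (∃ v, LoopBase alc.2.1 v ∧ v ∉ alc.1.map Prod.fst) ∧
           PathFromTo (alc.1 ++ alc.2.2) i j) := by
      intro p
      by_cases hp : PathFromTo p i j ∧ ¬ NonIntersecting p
      · obtain ⟨a, loop, cc, v, h1, h2, h3, h4, h5⟩ := exists_decomp hp.1 hp.2
        exact ⟨(a, loop, cc), fun _ _ => ⟨h1, h2, ⟨v, h3, h4⟩, h5⟩⟩
      · exact ⟨([], [], []), fun h1 h2 => absurd ⟨h1, h2⟩ hp⟩
    choose dec hdec using hdec
    obtain ⟨φ, hφ⟩ : ∃ φ : List (Fin N × Fin N) → List (Fin N × Fin N) × List (Fin N × Fin N),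
        ∀ p, φ p = ((dec p).2.1, (dec p).1 ++ (dec p).2.2) :=
      ⟨fun p => ((dec p).2.1, (dec p).1 ++ (dec p).2.2), fun _ => rfl⟩
    have hmemF : ∀ p ∈ F, PathFromTo p i j ∧ ¬ NonIntersecting p := by
      intro p hp
      rw [hFdef, Finset.mem_filter, hS, mem_pathsUpTo] at hp
      exact ⟨hp.1.2, hp.2⟩
    have hwt : ∀ p ∈ F, pathWeight W p =
        (fun y : List (Fin N × Fin N) × List (Fin N × Fin N) =>
          pathWeight W y.1 * pathWeight W y.2) (φ p) := by
      intro p hp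
      obtain ⟨hp1, hp2⟩ := hmemF p hp
      obtain ⟨h1, -, -, -⟩ := hdec p hp1 hp2
      rw [hφ p]
      simp only [pathWeight_append]
      calc pathWeight W p
          = pathWeight W ((dec p).1 ++ (dec p).2.1 ++ (dec p).2.2) := by rw [← h1]
        _ = _ := by rw [pathWeight_append, pathWeight_append]; ring
    have hinj : ∀ p₁ ∈ F, ∀ p₂ ∈ F, φ p₁ = φ p₂ → p₁ = p₂ := by
      intro p₁ hp₁ p₂ hp₂ heq
      obtain ⟨hq1, hni1⟩ := hmemF p₁ hp₁
      obtain ⟨hq2, hni2⟩ := hmemF p₂ hp₂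
      obtain ⟨e1, sl1, ⟨v₁, lb₁, hv₁⟩, -⟩ := hdec p₁ hq1 hni1
      obtain ⟨e2, sl2, ⟨v₂, lb₂, hv₂⟩, -⟩ := hdec p₂ hq2 hni2
      rw [hφ p₁, hφ p₂, Prod.mk.injEq] at heq
      obtain ⟨hl, hqq⟩ := heq
      have hv : v₁ = v₂ := by
        have b1 := lb₁.1
        have b2 := lb₂.1
        rw [hl] at b1
        rw [b1] at b2
        exact Option.some_inj.1 b2
      subst hv
      rw [← hl] at e2
      exact decomp_inj hq1.1 hq2.1 e1 e2 hqq lb₁.2 hv₁ hv₂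
    calc ∑ p ∈ F, pathWeight W p
        = ∑ p ∈ F, (fun y : List (Fin N × Fin N) × List (Fin N × Fin N) =>
            pathWeight W y.1 * pathWeight W y.2) (φ p) := Finset.sum_congr rfl hwt
      _ = ∑ y ∈ F.image φ, pathWeight W y.1 * pathWeight W y.2 :=
          (Finset.sum_image (f := fun y : List (Fin N × Fin N) × List (Fin N × Fin N) =>
            pathWeight W y.1 * pathWeight W y.2) hinj).symm
      _ ≤ ∑ y ∈ SLfin N ×ˢ S, pathWeight W y.1 * pathWeight W y.2 := by
          apply Finset.sum_le_sum_of_subset_of_nonneg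
          · intro y hy
            rw [Finset.mem_image] at hy
            obtain ⟨p, hp, rfl⟩ := hy
            obtain ⟨hp1, hp2⟩ := hmemF p hp
            obtain ⟨h1, h2, -, h5⟩ := hdec p hp1 hp2
            rw [hφ p, Finset.mem_product]
            refine ⟨mem_SLfin.2 h2, ?_⟩
            have hpl : p ∈ S := (Finset.mem_filter.1 hp).1
            have hlenp : p.length ≤ M := ((mem_pathsUpTo).1 hpl).1
            rw [hS, mem_pathsUpTo]
            refine ⟨?_, h5⟩
            have hlen1 := congrArg List.length h1
            simp only [List.length_append] at hlen1
            simp only [List.length_append]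
            omega
          · intro y _ _
            exact mul_nonneg (pathWeight_nonneg hW _) (pathWeight_nonneg hW _)
      _ = (∑ l ∈ SLfin N, pathWeight W l) * ∑ l ∈ S, pathWeight W l := by
          rw [Finset.sum_product]
          rw [Finset.sum_mul]
          exact Finset.sum_congr rfl fun x _ => by rw [Finset.mul_sum]

/-- Theorem B.? / Theorem `t:onlyTheSimpleOnes`: if the sum of the weights of all simple loops
is `< 1`, then `Σₙ Wⁿ` converges entrywise and `T⋆ ≤ Σₙ Wⁿ ≤ (1-c)⁻¹ T⋆` componentwise. -/
theorem geometric_series_bounded_by_simple_path_matrix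
    (N : ℕ) (hN : 1 ≤ N) (W : Matrix (Fin N) (Fin N) ℝ) (hW : ∀ i j, 0 ≤ W i j)
    (hsum : Summable fun L : {l : List (Fin N × Fin N) // IsSimpleLoop l} => pathWeight W L.1)
    (hc : slSum W < 1) :
    (∀ i j, Summable fun n : ℕ => (W ^ n) i j) ∧
      ∀ i j, Tstar W i j ≤ (∑' n : ℕ, (W ^ n) i j) ∧
        (∑' n : ℕ, (W ^ n) i j) ≤ (1 - slSum W)⁻¹ * Tstar W i j := by
  classical
  have hslq : slSum W = ∑ l ∈ SLfin N, pathWeight W l := slSum_eq W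
  have hc0 : 0 ≤ slSum W := by
    rw [hslq]; exact Finset.sum_nonneg fun l _ => pathWeight_nonneg hW l
  have h1c : 0 < 1 - slSum W := by linarith
  have hT0 : ∀ i j, 0 ≤ Tstar W i j := by
    intro i j
    rw [Tstar_eq]; exact Finset.sum_nonneg fun l _ => pathWeight_nonneg hW l
  have hSbound : ∀ (M : ℕ) (i j : Fin N),
      ∑ l ∈ pathsUpTo N M i j, pathWeight W l ≤ (1 - slSum W)⁻¹ * Tstar W i j := by
    intro M i j
    have h := key_bound W hW M i j
    rw [← hslq] at h
    set SmV := ∑ l ∈ pathsUpTo N M i j, pathWeight W l with hSm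
    have h2 : (1 - slSum W) * SmV ≤ Tstar W i j := by nlinarith [h]
    calc SmV = (1 - slSum W)⁻¹ * ((1 - slSum W) * SmV) := by
          rw [← mul_assoc, inv_mul_cancel₀ (ne_of_gt h1c), one_mul]
      _ ≤ (1 - slSum W)⁻¹ * Tstar W i j :=
          mul_le_mul_of_nonneg_left h2 (by positivity)
  have hpow0 : ∀ (n : ℕ) (i j : Fin N), 0 ≤ (W ^ n) i j := by
    intro n i j
    rw [pow_apply_eq]; exact Finset.sum_nonneg fun l _ => pathWeight_nonneg hW l
  have hrange : ∀ (M : ℕ) (i j : Fin N),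
      ∑ n ∈ Finset.range M, (W ^ n) i j ≤ (1 - slSum W)⁻¹ * Tstar W i j := by
    intro M i j
    calc ∑ n ∈ Finset.range M, (W ^ n) i j ≤ ∑ n ∈ Finset.range (M + 1), (W ^ n) i j := by
          apply Finset.sum_le_sum_of_subset_of_nonneg
          · exact Finset.range_subset_range.2 (by omega)
          · intro n _ _; exact hpow0 n i j
      _ = ∑ l ∈ pathsUpTo N M i j, pathWeight W l := sum_range_pow_apply W M i j
      _ ≤ _ := hSbound M i j
  have hsummable : ∀ i j, Summable fun n : ℕ => (W ^ n) i j := by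
    intro i j
    exact summable_of_sum_range_le (fun n => hpow0 n i j) (fun M => hrange M i j)
  refine ⟨hsummable, fun i j => ⟨?_, ?_⟩⟩
  · calc Tstar W i j = ∑ l ∈ Vfin N i j, pathWeight W l := Tstar_eq W i j
      _ ≤ ∑ l ∈ pathsUpTo N N i j, pathWeight W l := by
          apply Finset.sum_le_sum_of_subset_of_nonneg
          · intro l hl
            rw [mem_pathsUpTo]
            have h := mem_Vfin.1 hl
            exact ⟨nonIntersecting_length_le h.1 h.2, h.1⟩
          · intro l _ _; exact pathWeight_nonneg hW l
      _ = ∑ n ∈ Finset.range (N + 1), (W ^ n) i j := (sum_range_pow_apply W N i j).symm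
      _ ≤ ∑' n : ℕ, (W ^ n) i j := Summable.sum_le_tsum _ (fun n _ => hpow0 n i j) (hsummable i j)
  · exact Summable.tsum_le_of_sum_range_le (hsummable i j) (fun M => hrange M i j)
end
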